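/- arXiv:dg-ga/9609009 — 8 statements merged into one kernel-verified Lean document; each statement's English description precedes it below -/
import Mathlib

section
/- Let α > 1 and let h : (0,1] → ℝ be positive, monotone increasing, with h(x) ≤ x^α for all x ∈ (0,1]; set μ(x) := ∫_x^1 dt/h(t). Then for every s > 0, every f ∈ L²(0,1), and every x ∈ (0,1), the integral ∫_0^x exp(s(μ(x) − μ(y))) f(y) dy is well defined and satisfies |∫_0^x exp(s(μ(x) − μ(y))) f(y) dy| ≤ (1/√(2s)) · √(h(x)) · ‖f‖_{L²(0,1)}. -/
/-!
Since `h` is increasing, `μ y - μ x = ∫_y^x dt / h t ≥ (x - y) / h x` for `y ≤ x`, so the kernel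
satisfies `exp (s (μ x - μ y))² ≤ exp (-2s (x - y) / h x)`, whose integral over `(-∞, x)` is
`h x / (2s)`. The Cauchy–Schwarz inequality then gives the bound.
-/
open MeasureTheory Set Real

namespace MeasureTheory

variable {α : Type*} [MeasurableSpace α] {ν : Measure α} {f g : α → ℝ}

lemma MemLp.toReal_eLpNorm_two_eq_sqrt (hf : MemLp f 2 ν) :
    (eLpNorm f 2 ν).toReal = √(∫ y, f y ^ 2 ∂ν) := by
  rw [hf.eLpNorm_eq_integral_rpow_norm two_ne_zero ENNReal.ofNat_ne_top,
    ENNReal.toReal_ofReal (by positivity), sqrt_eq_rpow]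
  norm_num [Real.norm_eq_abs, sq_abs]

lemma abs_integral_mul_le_toReal_eLpNorm_two_mul (hf : MemLp f 2 ν) (hg : MemLp g 2 ν) :
    |∫ y, f y * g y ∂ν| ≤ (eLpNorm f 2 ν).toReal * (eLpNorm g 2 ν).toReal := by
  have holder := integral_mul_norm_le_Lp_mul_Lq HolderConjugate.two_two
    (by simpa using hf) (by simpa using hg)
  rw [hf.toReal_eLpNorm_two_eq_sqrt, hg.toReal_eLpNorm_two_eq_sqrt, sqrt_eq_rpow, sqrt_eq_rpow]
  norm_num [Real.norm_eq_abs, sq_abs] at holder ⊢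
  calc |∫ y, f y * g y ∂ν| ≤ ∫ y, |f y| * |g y| ∂ν := by
        simp_rw [← abs_mul]; exact abs_integral_le_integral_abs
    _ ≤ _ := by simpa only [one_div] using holder

end MeasureTheory

lemma integral_Iic_exp_mul_sub {a : ℝ} (ha : 0 < a) (x : ℝ) :
    ∫ y in Iic x, exp (a * (y - x)) = 1 / a := by
  simp_rw [mul_sub, sub_eq_add_neg, exp_add]
  rw [integral_mul_const, integral_exp_mul_Iic ha, div_mul_eq_mul_div, ← exp_add]
  simp

lemma integrableOn_Iic_exp_mul_sub {a : ℝ} (ha : 0 < a) (x : ℝ) :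
    IntegrableOn (fun y ↦ exp (a * (y - x))) (Iic x) := by
  simp_rw [mul_sub, sub_eq_add_neg, exp_add]
  exact (integrableOn_exp_mul_Iic ha x).mul_const _

lemma setIntegral_le_inv_of_le_exp_mul_sub {g : ℝ → ℝ} {S : Set ℝ} {a x : ℝ} (ha : 0 < a)
    (hSm : MeasurableSet S) (hS : S ⊆ Iic x) (hg : ∀ y ∈ S, 0 ≤ g y)
    (hgle : ∀ y ∈ S, g y ≤ exp (a * (y - x))) :
    ∫ y in S, g y ≤ 1 / a :=
  calc ∫ y in S, g y ≤ ∫ y in S, exp (a * (y - x)) :=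
        integral_mono_of_nonneg (ae_restrict_of_forall_mem hSm hg)
          ((integrableOn_Iic_exp_mul_sub ha x).mono_set hS) (ae_restrict_of_forall_mem hSm hgle)
    _ ≤ ∫ y in Iic x, exp (a * (y - x)) :=
        setIntegral_mono_set (integrableOn_Iic_exp_mul_sub ha x)
          (ae_of_all _ fun _ ↦ (exp_pos _).le) hS.eventuallyLE
    _ = 1 / a := integral_Iic_exp_mul_sub ha x

section Potential

variable {h : ℝ → ℝ} {s : Set ℝ} {y x c : ℝ}

lemma antitoneOn_one_div_of_monotoneOn (hpos : ∀ t ∈ s, 0 < h t) (hmono : MonotoneOn h s) :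
    AntitoneOn (fun t ↦ 1 / h t) s :=
  fun _ ht _ hu htu ↦ one_div_le_one_div_of_le (hpos _ ht) (hmono ht hu htu)

lemma sub_div_le_integral_one_div (hpos : ∀ t ∈ Icc y x, 0 < h t)
    (hmono : MonotoneOn h (Icc y x)) (hyx : y ≤ x) :
    (x - y) / h x ≤ ∫ t in y..x, 1 / h t := by
  have anti := antitoneOn_one_div_of_monotoneOn hpos hmono
  calc (x - y) / h x = ∫ _ in y..x, 1 / h x := by simp [div_eq_mul_inv]
    _ ≤ ∫ t in y..x, 1 / h t :=
        intervalIntegral.integral_mono_on hyx intervalIntegrable_const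
          (AntitoneOn.intervalIntegrable (by rwa [uIcc_of_le hyx]))
          fun t ht ↦ anti ht (right_mem_Icc.2 hyx) ht.2

lemma sub_div_le_integral_one_div_sub (hpos : ∀ t ∈ Icc y c, 0 < h t)
    (hmono : MonotoneOn h (Icc y c)) (hyx : y ≤ x) (hxc : x ≤ c) :
    (x - y) / h x ≤ (∫ t in y..c, 1 / h t) - ∫ t in x..c, 1 / h t := by
  have anti := antitoneOn_one_div_of_monotoneOn hpos hmono
  have hyx_sub : Icc y x ⊆ Icc y c := Icc_subset_Icc_right hxc
  rw [← intervalIntegral.integral_add_adjacent_intervals (b := x)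
    (AntitoneOn.intervalIntegrable (by rw [uIcc_of_le hyx]; exact anti.mono hyx_sub))
    (AntitoneOn.intervalIntegrable
      (by rw [uIcc_of_le hxc]; exact anti.mono (Icc_subset_Icc_left hyx))),
    add_sub_cancel_right]
  exact sub_div_le_integral_one_div (fun t ht ↦ hpos t (hyx_sub ht)) (hmono.mono hyx_sub) hyx

lemma antitoneOn_integral_one_div {a : ℝ} (hpos : ∀ t ∈ Ioc a c, 0 < h t)
    (hmono : MonotoneOn h (Ioc a c)) : AntitoneOn (fun x ↦ ∫ t in x..c, 1 / h t) (Ioc a c) := by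
  intro y hy x hx hyx
  have hsub : Icc y c ⊆ Ioc a c := Icc_subset_Ioc hy.1 le_rfl
  have hkey := sub_div_le_integral_one_div_sub (fun t ht ↦ hpos t (hsub ht)) (hmono.mono hsub)
    hyx hx.2
  have : 0 ≤ (x - y) / h x := div_nonneg (sub_nonneg.2 hyx) (hpos x hx).le
  dsimp only
  linarith

end Potential

section Kernel

variable {μ : ℝ → ℝ} {a x c s : ℝ}

lemma exp_sq_le_exp_of_sub_div_le {y : ℝ} (hs : 0 ≤ s) (hkey : (x - y) / c ≤ μ y - μ x) :
    exp (s * (μ x - μ y)) ^ 2 ≤ exp (2 * s / c * (y - x)) := by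
  rw [← exp_nat_mul, exp_le_exp]
  calc ((2 : ℕ) : ℝ) * (s * (μ x - μ y)) = -(2 * s) * (μ y - μ x) := by push_cast; ring
    _ ≤ -(2 * s) * ((x - y) / c) := mul_le_mul_of_nonpos_left hkey (by linarith)
    _ = 2 * s / c * (y - x) := by ring

variable (hμ : AntitoneOn μ (Ioo a x)) (hs : 0 < s) (hc : 0 < c)
  (hkey : ∀ y ∈ Ioo a x, (x - y) / c ≤ μ y - μ x)
include hμ hs hc hkey

lemma memLp_two_exp_mul_sub :
    MemLp (fun y ↦ exp (s * (μ x - μ y))) 2 (volume.restrict (Ioo a x)) := by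
  have hμm := aemeasurable_restrict_of_antitoneOn (μ := volume) measurableSet_Ioo hμ
  have hm : AEStronglyMeasurable (fun y ↦ exp (s * (μ x - μ y))) (volume.restrict (Ioo a x)) :=
    (by fun_prop : AEMeasurable _ _).aestronglyMeasurable
  refine (memLp_two_iff_integrable_sq hm).2 <| Integrable.mono'
    ((integrableOn_Iic_exp_mul_sub (by positivity : 0 < 2 * s / c) x).mono_set
      (Ioo_subset_Ioc_self.trans Ioc_subset_Iic_self))
    (hm.pow 2) ((ae_restrict_iff' measurableSet_Ioo).2 (ae_of_all _ fun y hy ↦ ?_))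
  rw [norm_of_nonneg (by positivity)]
  exact exp_sq_le_exp_of_sub_div_le hs.le (hkey y hy)

lemma toReal_eLpNorm_exp_mul_sub_le :
    (eLpNorm (fun y ↦ exp (s * (μ x - μ y))) 2 (volume.restrict (Ioo a x))).toReal ≤
      √(c / (2 * s)) := by
  rw [(memLp_two_exp_mul_sub hμ hs hc hkey).toReal_eLpNorm_two_eq_sqrt, ← one_div_div]
  exact sqrt_le_sqrt <| setIntegral_le_inv_of_le_exp_mul_sub (by positivity) measurableSet_Ioo
    (Ioo_subset_Ioc_self.trans Ioc_subset_Iic_self) (fun _ _ ↦ by positivity)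
    fun y hy ↦ exp_sq_le_exp_of_sub_div_le hs.le (hkey y hy)

end Kernel

theorem stmt_0_general (h : ℝ → ℝ)
    (hpos : ∀ x ∈ Ioc (0:ℝ) 1, 0 < h x)
    (hmono : ∀ x ∈ Ioc (0:ℝ) 1, ∀ y ∈ Ioc (0:ℝ) 1, x ≤ y → h x ≤ h y)
    (μ : ℝ → ℝ) (hμ : ∀ x, μ x = ∫ t in x..1, 1 / h t)
    (s : ℝ) (hs : 0 < s) (f : ℝ → ℝ)
    (hf : MemLp f 2 (volume.restrict (Ioo (0:ℝ) 1)))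
    (x : ℝ) (hx : x ∈ Ioo (0:ℝ) 1) :
    IntegrableOn (fun y => Real.exp (s * (μ x - μ y)) * f y) (Ioo 0 x) ∧
    |∫ y in Ioo 0 x, Real.exp (s * (μ x - μ y)) * f y| ≤
      (1 / Real.sqrt (2 * s)) * Real.sqrt (h x) *
        (eLpNorm f 2 (volume.restrict (Ioo (0:ℝ) 1))).toReal := by
  have hmonoOn : MonotoneOn h (Ioc 0 1) := fun a ha b hb ↦ hmono a ha b hb
  obtain rfl : μ = fun x ↦ ∫ t in x..1, 1 / h t := funext hμ
  have hhx : 0 < h x := hpos x ⟨hx.1, hx.2.le⟩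
  have hanti := (antitoneOn_integral_one_div hpos hmonoOn).mono
    (Ioo_subset_Ioc_self.trans (Ioc_subset_Ioc_right hx.2.le))
  have hkey (y : ℝ) (hy : y ∈ Ioo 0 x) :
      (x - y) / h x ≤ (∫ t in y..1, 1 / h t) - ∫ t in x..1, 1 / h t :=
    have hsub : Icc y 1 ⊆ Ioc 0 1 := Icc_subset_Ioc hy.1 le_rfl
    sub_div_le_integral_one_div_sub (fun t ht ↦ hpos t (hsub ht)) (hmonoOn.mono hsub) hy.2.le
      hx.2.le
  have hν : volume.restrict (Ioo 0 x) ≤ volume.restrict (Ioo (0:ℝ) 1) :=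
    Measure.restrict_mono (Ioo_subset_Ioo_right hx.2.le) le_rfl
  have hK := memLp_two_exp_mul_sub hanti hs hhx hkey
  have hfx : MemLp f 2 (volume.restrict (Ioo 0 x)) := hf.mono_measure hν
  have hK_norm := toReal_eLpNorm_exp_mul_sub_le hanti hs hhx hkey
  have hf_norm : (eLpNorm f 2 (volume.restrict (Ioo 0 x))).toReal ≤
      (eLpNorm f 2 (volume.restrict (Ioo 0 1))).toReal :=
    ENNReal.toReal_mono hf.eLpNorm_ne_top (eLpNorm_mono_measure f hν)
  refine ⟨hK.integrable_mul hfx, ?_⟩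
  calc _ ≤ _ := abs_integral_mul_le_toReal_eLpNorm_two_mul hK hfx
    _ ≤ √(h x / (2 * s)) * (eLpNorm f 2 (volume.restrict (Ioo 0 1))).toReal :=
        mul_le_mul hK_norm hf_norm ENNReal.toReal_nonneg (sqrt_nonneg _)
    _ = _ := by rw [sqrt_div' _ (by positivity)]; ring

/-- Lemma 3.1(i): the estimate `|P_{0,s}^{1/h} f(x)| ≤ (1/√(2s)) √(h(x)) ‖f‖_{L²}`. -/
theorem stmt_0 (α : ℝ) (hα : 1 < α) (h : ℝ → ℝ)
    (hpos : ∀ x ∈ Ioc (0:ℝ) 1, 0 < h x)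
    (hmono : ∀ x ∈ Ioc (0:ℝ) 1, ∀ y ∈ Ioc (0:ℝ) 1, x ≤ y → h x ≤ h y)
    (hbound : ∀ x ∈ Ioc (0:ℝ) 1, h x ≤ x ^ α)
    (μ : ℝ → ℝ) (hμ : ∀ x, μ x = ∫ t in x..1, 1 / h t)
    (s : ℝ) (hs : 0 < s) (f : ℝ → ℝ)
    (hf : MemLp f 2 (volume.restrict (Ioo (0:ℝ) 1)))
    (x : ℝ) (hx : x ∈ Ioo (0:ℝ) 1) :
    IntegrableOn (fun y => Real.exp (s * (μ x - μ y)) * f y) (Ioo 0 x) ∧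
    |∫ y in Ioo 0 x, Real.exp (s * (μ x - μ y)) * f y| ≤
      (1 / Real.sqrt (2 * s)) * Real.sqrt (h x) *
        (eLpNorm f 2 (volume.restrict (Ioo (0:ℝ) 1))).toReal :=
  stmt_0_general h hpos hmono μ hμ s hs f hf x hx
end

section
/- Let α > 1 and let h : (0,1] → ℝ be positive, monotone increasing, with h(x) ≤ x^α for all x ∈ (0,1]; set μ(x) := ∫_x^1 dt/h(t). Then for every s₀ < 0 there is a constant c > 0 (depending only on h, α and s₀) such that for all s ≤ s₀, all f ∈ L²(0,1), and all x ∈ (0,1): |∫_x^1 exp(s(μ(x) − μ(y))) f(y) dy| ≤ (c/√|s|) · x^{α/2} · ‖f‖_{L²(0,1)}. -/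
/-!
By Cauchy–Schwarz it suffices to show `∫_x^1 e^{2s(μ(x) - μ(y))} dy ≤ C x^α / |s|`.
Since `1/h(t) ≥ t^{-α} ≥ (2x)^{-α}` for `t ≤ 2x`, we have
`μ(x) - μ(y) ≥ min(y - x, x) / (2x)^α`, so with `κ = 2|s| / (2x)^α` the integrand is at most
`e^{-κ(y - x)} + e^{-κx}`. The first term integrates to at most `1/κ ≍ x^α / |s|`. The second is
`exp(-c |s| x^{1-α})`, and `e^{-T} ≤ k!/T^k` with `k (α - 1) ≥ α` bounds it by `C x^α / |s|`
uniformly for `|s| ≥ |s₀|`.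
-/

open MeasureTheory Set Real
open scoped Nat

theorem exists_exp_neg_div_rpow_le {β : ℝ} (hβ : 0 < β) (α : ℝ) {a₀ : ℝ} (ha₀ : 0 < a₀) :
    ∃ C > 0, ∀ a ≥ a₀, ∀ x ∈ Ioc (0:ℝ) 1, exp (-(a / x ^ β)) ≤ C * x ^ α / a := by
  set k : ℕ := ⌈α / β⌉₊ + 1
  have hk : α ≤ β * k := by
    have := Nat.le_ceil (α / β)
    rw [← div_le_iff₀' hβ]; push_cast [k]; linarith
  refine ⟨k ! / a₀ ^ (k - 1), by positivity, fun a ha x ⟨hx0, hx1⟩ => ?_⟩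
  have hapos : 0 < a := ha₀.trans_le ha
  have hT : 0 < a / x ^ β := div_pos hapos (rpow_pos_of_pos hx0 β)
  have hak : a ^ k = a ^ (k - 1) * a := pow_sub_one_mul (Nat.succ_ne_zero _) a
  calc exp (-(a / x ^ β)) = (exp (a / x ^ β))⁻¹ := exp_neg _
    _ ≤ ((a / x ^ β) ^ k / k !)⁻¹ := inv_anti₀ (by positivity) (pow_div_factorial_le_exp _ hT.le k)
    _ = k ! * x ^ (β * k) / (a ^ (k - 1) * a) := by
        rw [rpow_mul hx0.le, rpow_natCast, div_pow, ← hak]; field_simp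
    _ ≤ k ! * x ^ α / (a₀ ^ (k - 1) * a) := by
        have hxk : x ^ (β * k) ≤ x ^ α := rpow_le_rpow_of_exponent_ge hx0 hx1 hk
        gcongr
    _ = k ! / a₀ ^ (k - 1) * x ^ α / a := by field_simp

theorem setIntegral_exp_neg_mul_sub_le {κ : ℝ} (hκ : 0 < κ) (x b : ℝ) :
    ∫ y in Ioo x b, exp (-(κ * (y - x))) ≤ 1 / κ := by
  have hrw : ∀ y, exp (-(κ * (y - x))) = exp ((-κ) * y) * exp (κ * x) := fun y => by
    rw [← exp_add]; ring_nf
  have hint : IntegrableOn (fun y => exp (-(κ * (y - x)))) (Ioi x) := by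
    simp_rw [hrw]
    exact (integrableOn_exp_mul_Ioi (neg_lt_zero.2 hκ) x).mul_const _
  calc ∫ y in Ioo x b, exp (-(κ * (y - x)))
      ≤ ∫ y in Ioi x, exp (-(κ * (y - x))) :=
        setIntegral_mono_set hint (.of_forall fun _ => (exp_pos _).le)
          Ioo_subset_Ioi_self.eventuallyLE
    _ = 1 / κ := by
        simp_rw [hrw]
        rw [integral_mul_const, integral_exp_mul_Ioi (neg_lt_zero.2 hκ), neg_div_neg_eq,
          div_mul_eq_mul_div, ← exp_add]
        simp

theorem setIntegral_exp_neg_mul_min_le {κ x : ℝ} (hκ : 0 < κ) (hx : 0 ≤ x) :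
    ∫ y in Ioo x 1, exp (-(κ * min (y - x) x)) ≤ 1 / κ + exp (-(κ * x)) := by
  have hint : IntegrableOn (fun y => exp (-(κ * (y - x)))) (Ioo x 1) :=
    (Continuous.integrableOn_Icc (by fun_prop)).mono_set Ioo_subset_Icc_self
  have hpt : ∀ y, exp (-(κ * min (y - x) x)) ≤ exp (-(κ * (y - x))) + exp (-(κ * x)) := by
    intro y
    rcases min_cases (y - x) x with ⟨hm, -⟩ | ⟨hm, -⟩ <;> rw [hm] <;>
      linarith [exp_pos (-(κ * x)), exp_pos (-(κ * (y - x)))]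
  calc ∫ y in Ioo x 1, exp (-(κ * min (y - x) x))
      ≤ ∫ y in Ioo x 1, (exp (-(κ * (y - x))) + exp (-(κ * x))) :=
        integral_mono_of_nonneg (.of_forall fun _ => (exp_pos _).le)
          (hint.add (integrableOn_const measure_Ioo_lt_top.ne)) (.of_forall hpt)
    _ = (∫ y in Ioo x 1, exp (-(κ * (y - x)))) + volume.real (Ioo x 1) * exp (-(κ * x)) := by
        rw [integral_add hint (integrableOn_const measure_Ioo_lt_top.ne), setIntegral_const,
          smul_eq_mul]
    _ ≤ 1 / κ + 1 * exp (-(κ * x)) := by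
        gcongr
        · exact setIntegral_exp_neg_mul_sub_le hκ x 1
        · rw [Real.volume_real_Ioo]; exact max_le (by linarith) zero_le_one
    _ = 1 / κ + exp (-(κ * x)) := by rw [one_mul]

theorem abs_setIntegral_mul_le_sqrt_mul_eLpNorm {X : Type*} [MeasurableSpace X] {ν : Measure X}
    {S T : Set X} (hST : S ⊆ T) {g f : X → ℝ} (hg : MemLp g 2 (ν.restrict S))
    (hf : MemLp f 2 (ν.restrict T)) :
    |∫ y in S, g y * f y ∂ν| ≤ √(∫ y in S, g y ^ 2 ∂ν) * (eLpNorm f 2 (ν.restrict T)).toReal := by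
  have hνST : ν.restrict S ≤ ν.restrict T := Measure.restrict_mono hST le_rfl
  have hfS : MemLp f 2 (ν.restrict S) := hf.mono_measure hνST
  have hfS_norm :
      (∫ y in S, ‖f y‖ ^ (2:ℝ) ∂ν) ^ (1 / (2:ℝ)) = (eLpNorm f 2 (ν.restrict S)).toReal := by
    rw [hfS.eLpNorm_eq_integral_rpow_norm two_ne_zero ENNReal.ofNat_ne_top,
      ENNReal.toReal_ofReal (by positivity)]
    norm_num
  calc |∫ y in S, g y * f y ∂ν| ≤ ∫ y in S, ‖g y‖ * ‖f y‖ ∂ν := by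
        simpa only [← abs_mul, norm_eq_abs] using abs_integral_le_integral_abs
    _ ≤ (∫ y in S, ‖g y‖ ^ (2:ℝ) ∂ν) ^ (1 / (2:ℝ)) * (∫ y in S, ‖f y‖ ^ (2:ℝ) ∂ν) ^ (1 / (2:ℝ)) :=
        integral_mul_norm_le_Lp_mul_Lq .two_two (by simpa using hg) (by simpa using hfS)
    _ = √(∫ y in S, g y ^ 2 ∂ν) * (eLpNorm f 2 (ν.restrict S)).toReal := by
        rw [hfS_norm, sqrt_eq_rpow, one_div]
        simp only [norm_eq_abs, rpow_two, sq_abs]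
    _ ≤ √(∫ y in S, g y ^ 2 ∂ν) * (eLpNorm f 2 (ν.restrict T)).toReal := by
        gcongr
        exact hf.2.ne

section

variable {h μ : ℝ → ℝ} (hpos : ∀ x ∈ Ioc (0:ℝ) 1, 0 < h x)
    (hmono : ∀ x ∈ Ioc (0:ℝ) 1, ∀ y ∈ Ioc (0:ℝ) 1, x ≤ y → h x ≤ h y)
    (hμ : ∀ x, μ x = ∫ t in x..1, 1 / h t)

include hpos hmono

theorem intervalIntegrable_one_div_of_monotoneOn {a b : ℝ} (ha : 0 < a) (hab : a ≤ b)
    (hb : b ≤ 1) : IntervalIntegrable (fun t => 1 / h t) volume a b := by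
  refine AntitoneOn.intervalIntegrable fun u hu v hv huv => ?_
  rw [uIcc_of_le hab] at hu hv
  have hu' : u ∈ Ioc (0:ℝ) 1 := ⟨ha.trans_le hu.1, hu.2.trans hb⟩
  have hv' : v ∈ Ioc (0:ℝ) 1 := ⟨ha.trans_le hv.1, hv.2.trans hb⟩
  exact one_div_le_one_div_of_le (hpos u hu') (hmono u hu' v hv' huv)

include hμ

theorem sub_eq_intervalIntegral_one_div {x y : ℝ} (hx : 0 < x) (hxy : x ≤ y) (hy : y ≤ 1) :
    μ x - μ y = ∫ t in x..y, 1 / h t := by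
  rw [hμ, hμ, ← intervalIntegral.integral_add_adjacent_intervals
    (intervalIntegrable_one_div_of_monotoneOn hpos hmono hx hxy hy)
    (intervalIntegrable_one_div_of_monotoneOn hpos hmono (hx.trans_le hxy) hy le_rfl)]
  ring

theorem antitoneOn_of_eq_intervalIntegral : AntitoneOn μ (Ioc 0 1) := by
  intro x hx y hy hxy
  rw [← sub_nonneg, sub_eq_intervalIntegral_one_div hpos hmono hμ hx.1 hxy hy.2]
  exact intervalIntegral.integral_nonneg hxy fun t ht =>
    (one_div_pos.2 (hpos t ⟨hx.1.trans_le ht.1, ht.2.trans hy.2⟩)).le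

theorem min_div_rpow_le_sub {α : ℝ} (hα : 0 ≤ α) (hbound : ∀ x ∈ Ioc (0:ℝ) 1, h x ≤ x ^ α)
    {x y : ℝ} (hx : 0 < x) (hxy : x ≤ y) (hy : y ≤ 1) :
    min (y - x) x / (2 * x) ^ α ≤ μ x - μ y := by
  set z := min y (2 * x)
  have hxz : x ≤ z := le_min hxy (by linarith)
  have hzy : z ≤ y := min_le_left _ _
  have hlower : ∀ t ∈ Icc x z, 1 / (2 * x) ^ α ≤ 1 / h t := fun t ht => by
    have ht' : t ∈ Ioc (0:ℝ) 1 := ⟨hx.trans_le ht.1, ht.2.trans (hzy.trans hy)⟩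
    refine one_div_le_one_div_of_le (hpos t ht') ((hbound t ht').trans ?_)
    exact rpow_le_rpow ht'.1.le (ht.2.trans (min_le_right _ _)) hα
  calc min (y - x) x / (2 * x) ^ α = ∫ _ in x..z, 1 / (2 * x) ^ α := by
        have hzx : z - x = min (y - x) x := by rw [← min_sub_sub_right]; ring_nf
        rw [intervalIntegral.integral_const, smul_eq_mul, hzx, mul_one_div]
    _ ≤ ∫ t in x..z, 1 / h t :=
        intervalIntegral.integral_mono_on hxz intervalIntegrable_const
          (intervalIntegrable_one_div_of_monotoneOn hpos hmono hx hxz (hzy.trans hy)) hlower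
    _ = μ x - μ z := (sub_eq_intervalIntegral_one_div hpos hmono hμ hx hxz (hzy.trans hy)).symm
    _ ≤ μ x - μ y := by
        gcongr
        exact antitoneOn_of_eq_intervalIntegral hpos hmono hμ ⟨hx.trans_le hxz, hzy.trans hy⟩
          ⟨hx.trans_le hxy, hy⟩ hzy

theorem memLp_exp_mul_sub {s : ℝ} (hs : s ≤ 0) {x : ℝ} (hx : 0 < x) :
    MemLp (fun y => exp (s * (μ x - μ y))) 2 (volume.restrict (Ioo x 1)) := by
  have hanti := antitoneOn_of_eq_intervalIntegral hpos hmono hμ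
  have hmeas : AEMeasurable μ (volume.restrict (Ioo x 1)) :=
    aemeasurable_restrict_of_antitoneOn measurableSet_Ioo
      (hanti.mono fun y hy => ⟨hx.trans hy.1, hy.2.le⟩)
  refine MemLp.of_bound (measurable_exp.comp_aemeasurable
    ((aemeasurable_const.sub hmeas).const_mul s)).aestronglyMeasurable 1 ?_
  filter_upwards [ae_restrict_mem measurableSet_Ioo] with y hy
  rw [norm_of_nonneg (exp_pos _).le, exp_le_one_iff]
  exact mul_nonpos_of_nonpos_of_nonneg hs <| sub_nonneg.2 <|
    hanti ⟨hx, hy.1.le.trans hy.2.le⟩ ⟨hx.trans hy.1, hy.2.le⟩ hy.1.le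

theorem setIntegral_exp_mul_sub_sq_le {α : ℝ} (hα : 0 ≤ α)
    (hbound : ∀ x ∈ Ioc (0:ℝ) 1, h x ≤ x ^ α) {s : ℝ} (hs : s < 0) {x : ℝ} (hx : 0 < x) :
    ∫ y in Ioo x 1, exp (s * (μ x - μ y)) ^ 2 ≤
      2 ^ (α - 1) * x ^ α / -s + exp (-(2 ^ (1 - α) * -s / x ^ (α - 1))) := by
  set κ := 2 * -s / (2 * x) ^ α
  have hκ : 0 < κ := div_pos (by linarith) (by positivity)
  have hpt : ∀ y ∈ Ioo x 1, exp (s * (μ x - μ y)) ^ 2 ≤ exp (-(κ * min (y - x) x)) := by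
    intro y hy
    have hmin := min_div_rpow_le_sub hpos hmono hμ hα hbound hx hy.1.le hy.2.le
    rw [sq, ← exp_add, exp_le_exp]
    have := mul_le_mul_of_nonpos_left hmin (by linarith : 2 * s ≤ 0)
    have hκmin : -(κ * min (y - x) x) = 2 * s * (min (y - x) x / (2 * x) ^ α) := by ring
    linarith
  have hint : IntegrableOn (fun y => exp (-(κ * min (y - x) x))) (Ioo x 1) :=
    (Continuous.integrableOn_Icc (by fun_prop)).mono_set Ioo_subset_Icc_self
  calc ∫ y in Ioo x 1, exp (s * (μ x - μ y)) ^ 2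
      ≤ ∫ y in Ioo x 1, exp (-(κ * min (y - x) x)) :=
        integral_mono_of_nonneg (.of_forall fun _ => sq_nonneg _) hint
          ((ae_restrict_mem measurableSet_Ioo).mono hpt)
    _ ≤ 1 / κ + exp (-(κ * x)) := setIntegral_exp_neg_mul_min_le hκ hx.le
    _ = 2 ^ (α - 1) * x ^ α / -s + exp (-(2 ^ (1 - α) * -s / x ^ (α - 1))) := by
        have hs' : -s ≠ 0 := by linarith
        simp only [κ]
        rw [mul_rpow zero_le_two hx.le, rpow_sub two_pos, rpow_sub two_pos, rpow_sub hx,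
          rpow_one, rpow_one]
        field_simp

end

/-- Lemma 3.1(ii): `|P_{1,s}^{1/h} f(x)| ≤ (c/√|s|) x^{α/2} ‖f‖_{L²}` for `s ≤ s₀ < 0`. -/
theorem stmt_1 (α : ℝ) (hα : 1 < α) (h : ℝ → ℝ)
    (hpos : ∀ x ∈ Ioc (0:ℝ) 1, 0 < h x)
    (hmono : ∀ x ∈ Ioc (0:ℝ) 1, ∀ y ∈ Ioc (0:ℝ) 1, x ≤ y → h x ≤ h y)
    (hbound : ∀ x ∈ Ioc (0:ℝ) 1, h x ≤ x ^ α)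
    (μ : ℝ → ℝ) (hμ : ∀ x, μ x = ∫ t in x..1, 1 / h t)
    (s₀ : ℝ) (hs₀ : s₀ < 0) :
    ∃ c > (0:ℝ), ∀ s ≤ s₀, ∀ f : ℝ → ℝ,
      MemLp f 2 (volume.restrict (Ioo (0:ℝ) 1)) →
      ∀ x ∈ Ioo (0:ℝ) 1,
        |∫ y in Ioo x 1, Real.exp (s * (μ x - μ y)) * f y| ≤
          (c / Real.sqrt |s|) * x ^ (α / 2) *
            (eLpNorm f 2 (volume.restrict (Ioo (0:ℝ) 1))).toReal := by
  obtain ⟨C, hC, hdecay⟩ := exists_exp_neg_div_rpow_le (sub_pos.2 hα) α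
    (a₀ := 2 ^ (1 - α) * -s₀) (by have := neg_pos.2 hs₀; positivity)
  set K := 2 ^ (α - 1) + C / 2 ^ (1 - α)
  refine ⟨√K, by positivity, fun s hs f hf x hx => ?_⟩
  have hsq : ∫ y in Ioo x 1, exp (s * (μ x - μ y)) ^ 2 ≤ K * x ^ α / |s| := calc
    _ ≤ 2 ^ (α - 1) * x ^ α / -s + exp (-(2 ^ (1 - α) * -s / x ^ (α - 1))) :=
      setIntegral_exp_mul_sub_sq_le hpos hmono hμ (by linarith) hbound (by linarith) hx.1
    _ ≤ 2 ^ (α - 1) * x ^ α / -s + C * x ^ α / (2 ^ (1 - α) * -s) := by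
      gcongr
      exact hdecay _ (by gcongr) x ⟨hx.1, hx.2.le⟩
    _ = K * x ^ α / |s| := by
      simp only [K]
      rw [abs_of_neg (by linarith)]
      field_simp
      ring
  calc |∫ y in Ioo x 1, exp (s * (μ x - μ y)) * f y|
      ≤ √(∫ y in Ioo x 1, exp (s * (μ x - μ y)) ^ 2) *
          (eLpNorm f 2 (volume.restrict (Ioo 0 1))).toReal :=
        abs_setIntegral_mul_le_sqrt_mul_eLpNorm (Ioo_subset_Ioo_left hx.1.le)
          (memLp_exp_mul_sub hpos hmono hμ (by linarith) hx.1) hf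
    _ ≤ √(K * x ^ α / |s|) * (eLpNorm f 2 (volume.restrict (Ioo 0 1))).toReal := by
      gcongr
    _ = √K / √|s| * x ^ (α / 2) * (eLpNorm f 2 (volume.restrict (Ioo 0 1))).toReal := by
      have hxα : √(x ^ α) = x ^ (α / 2) := by rw [sqrt_eq_rpow, ← rpow_mul hx.1.le]; ring_nf
      rw [sqrt_div' _ (abs_nonneg s), sqrt_mul' _ (rpow_nonneg hx.1.le α), hxα]
      ring
end

section
/- Let α > 1 and let h : (0,1] → ℝ be positive, monotone increasing, with h(x) ≤ x^α for all x ∈ (0,1]; set μ(x) := ∫_x^1 dt/h(t). Then for every s < 0 and every x ∈ (0,1/2]: exp(2sμ(x)) · ∫_x^{2x} exp(−2sμ(y)) dy ≤ h(2x)/(2|s|) ≤ (2^{α−1}/|s|) · x^α. -/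
open MeasureTheory Set Real

/-- The near-diagonal estimate in the proof of Lemma 3.1(ii):
`exp(2sμ(x)) ∫_x^{2x} exp(−2sμ(y)) dy ≤ h(2x)/(2|s|) ≤ (2^{α−1}/|s|) x^α`. -/
theorem stmt_2 (α : ℝ) (hα : 1 < α) (h : ℝ → ℝ)
    (hpos : ∀ x ∈ Ioc (0:ℝ) 1, 0 < h x)
    (hmono : ∀ x ∈ Ioc (0:ℝ) 1, ∀ y ∈ Ioc (0:ℝ) 1, x ≤ y → h x ≤ h y)
    (hbound : ∀ x ∈ Ioc (0:ℝ) 1, h x ≤ x ^ α)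
    (μ : ℝ → ℝ) (hμ : ∀ x, μ x = ∫ t in x..1, 1 / h t)
    (s : ℝ) (hs : s < 0) (x : ℝ) (hx : x ∈ Ioc (0:ℝ) (1/2)) :
    Real.exp (2 * s * μ x) * ∫ y in x..(2*x), Real.exp (-(2 * s * μ y)) ≤
      h (2*x) / (2 * |s|) ∧
    h (2*x) / (2 * |s|) ≤ (2 ^ (α - 1) / |s|) * x ^ α := by
  obtain ⟨hx0, hx12⟩ := hx
  have hx2le : 2 * x ≤ 1 := by linarith
  have hx2mem : 2 * x ∈ Ioc (0:ℝ) 1 := ⟨by linarith, hx2le⟩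
  have h2x : 0 < h (2 * x) := hpos _ hx2mem
  have hsabs : |s| = -s := abs_of_neg hs
  have hsabs0 : 0 < |s| := abs_pos.mpr (ne_of_lt hs)
  -- integrability of 1/h on subintervals of [x,1]
  have hint : ∀ a b : ℝ, x ≤ a → a ≤ b → b ≤ 1 →
      IntervalIntegrable (fun t => 1 / h t) volume a b := by
    intro a b hxa hab hb1
    apply AntitoneOn.intervalIntegrable
    rw [uIcc_of_le hab]
    intro p hp q hq hpq
    have hpm : p ∈ Ioc (0:ℝ) 1 := ⟨lt_of_lt_of_le hx0 (le_trans hxa hp.1), le_trans hp.2 hb1⟩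
    have hqm : q ∈ Ioc (0:ℝ) 1 := ⟨lt_of_lt_of_le hx0 (le_trans hxa hq.1), le_trans hq.2 hb1⟩
    exact one_div_le_one_div_of_le (hpos p hpm) (hmono p hpm q hqm hpq)
  have hμdiff : ∀ a b : ℝ, x ≤ a → a ≤ b → b ≤ 1 →
      μ a - μ b = ∫ t in a..b, 1 / h t := by
    intro a b hxa hab hb1
    have := intervalIntegral.integral_add_adjacent_intervals (hint a b hxa hab hb1)
      (hint b 1 (le_trans hxa hab) hb1 le_rfl)
    rw [hμ a, hμ b, ← this]; ring
  -- μ is antitone on [x, 2x]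
  have hμanti : ∀ a b : ℝ, x ≤ a → a ≤ b → b ≤ 2*x → μ b ≤ μ a := by
    intro a b hxa hab hb2
    have hd := hμdiff a b hxa hab (le_trans hb2 hx2le)
    have hnn : 0 ≤ ∫ t in a..b, 1 / h t := by
      apply intervalIntegral.integral_nonneg hab
      intro u hu
      have hum : u ∈ Ioc (0:ℝ) 1 := ⟨lt_of_lt_of_le hx0 (le_trans hxa hu.1),
        le_trans hu.2 (le_trans hb2 hx2le)⟩
      have := hpos u hum
      positivity
    linarith
  set c : ℝ := 2 * s / h (2 * x) with hc
  have hcneg : c < 0 := div_neg_of_neg_of_pos (by linarith) h2x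
  -- pointwise bound
  have hpt : ∀ y ∈ Icc x (2*x),
      Real.exp (2 * s * μ x) * Real.exp (-(2 * s * μ y)) ≤ Real.exp (c * (y - x)) := by
    intro y hy
    rw [← Real.exp_add]
    apply Real.exp_le_exp.mpr
    have hdiff : μ x - μ y = ∫ t in x..y, 1 / h t := hμdiff x y le_rfl hy.1
      (le_trans hy.2 hx2le)
    have hlow : (y - x) / h (2*x) ≤ μ x - μ y := by
      rw [hdiff]
      have : (y - x) / h (2*x) = ∫ t in x..y, 1 / h (2*x) := by
        simp [div_eq_mul_inv, one_div]
      rw [this]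
      apply intervalIntegral.integral_mono_on hy.1
        (intervalIntegrable_const) (hint x y le_rfl hy.1 (le_trans hy.2 hx2le))
      intro t ht
      have htm : t ∈ Ioc (0:ℝ) 1 := ⟨lt_of_lt_of_le hx0 ht.1,
        le_trans (le_trans ht.2 hy.2) hx2le⟩
      exact one_div_le_one_div_of_le (hpos t htm) (hmono t htm (2*x) hx2mem
        (le_trans ht.2 hy.2))
    have : 2 * s * μ x + -(2 * s * μ y) = 2 * s * (μ x - μ y) := by ring
    rw [this]
    have h2s : 2 * s < 0 := by linarith
    calc 2 * s * (μ x - μ y) ≤ 2 * s * ((y - x) / h (2*x)) := by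
          exact mul_le_mul_of_nonpos_left hlow (le_of_lt h2s)
      _ = c * (y - x) := by rw [hc]; ring
  -- integral inequality
  have hxlt2x : x ≤ 2 * x := by linarith
  have hIlhs : IntervalIntegrable
      (fun y => Real.exp (2 * s * μ x) * Real.exp (-(2 * s * μ y))) volume x (2*x) := by
    apply AntitoneOn.intervalIntegrable
    rw [uIcc_of_le hxlt2x]
    intro p hp q hq hpq
    have : μ q ≤ μ p := hμanti p q hp.1 hpq hq.2
    have h2s : (0:ℝ) ≤ -(2*s) := by linarith
    apply mul_le_mul_of_nonneg_left _ (le_of_lt (Real.exp_pos _))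
    apply Real.exp_le_exp.mpr
    nlinarith
  have hIrhs : IntervalIntegrable (fun y => Real.exp (c * (y - x))) volume x (2*x) :=
    (Continuous.intervalIntegrable (by continuity) _ _)
  have hmain : Real.exp (2 * s * μ x) * ∫ y in x..(2*x), Real.exp (-(2 * s * μ y))
      ≤ h (2*x) / (2 * |s|) := by
    rw [← intervalIntegral.integral_const_mul]
    calc (∫ y in x..(2*x), Real.exp (2 * s * μ x) * Real.exp (-(2 * s * μ y)))
        ≤ ∫ y in x..(2*x), Real.exp (c * (y - x)) :=
          intervalIntegral.integral_mono_on hxlt2x hIlhs hIrhs hpt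
      _ = ∫ y in (0:ℝ)..x, Real.exp (c * y) := by
          have := intervalIntegral.integral_comp_sub_right
            (a := x) (b := 2*x) (fun y => Real.exp (c * y)) x
          simpa [show 2*x - x = x from by ring] using this
      _ = c⁻¹ * (Real.exp (c * x) - Real.exp (c * 0)) := by
          rw [intervalIntegral.integral_comp_mul_left (fun y => Real.exp y) (ne_of_lt hcneg)]
          simp [integral_exp]
      _ ≤ h (2*x) / (2 * |s|) := by
          have hinv : c⁻¹ < 0 := inv_neg''.mpr hcneg
          have hexp : 0 < Real.exp (c * x) := Real.exp_pos _
          have step1 : c⁻¹ * (Real.exp (c * x) - Real.exp (c * 0)) ≤ -c⁻¹ := by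
            simp only [mul_zero, Real.exp_zero]
            nlinarith
          have hs' : s ≠ 0 := ne_of_lt hs
          have hh' : h (2*x) ≠ 0 := ne_of_gt h2x
          have step2 : -c⁻¹ = h (2*x) / (2 * |s|) := by
            rw [hsabs, hc]
            field_simp
          linarith
  refine ⟨hmain, ?_⟩
  -- second inequality
  have hb : h (2*x) ≤ (2*x) ^ α := hbound _ hx2mem
  have hpow : (2*x) ^ α = 2 ^ α * x ^ α := Real.mul_rpow (by norm_num) (le_of_lt hx0)
  have h2a : (2:ℝ) ^ (α - 1) = 2 ^ α / 2 := by
    rw [Real.rpow_sub (by norm_num : (0:ℝ) < 2), Real.rpow_one]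
  rw [div_le_iff₀ (by positivity), h2a]
  calc h (2*x) ≤ 2 ^ α * x ^ α := hpow ▸ hb
    _ = 2 ^ α / 2 / |s| * x ^ α * (2 * |s|) := by field_simp
end

section
/- Let α > 1 and let h : (0,1] → ℝ be positive, monotone increasing, with h(x) ≤ x^α for all x ∈ (0,1]; set μ(x) := ∫_x^1 dt/h(t). Then for every s₀ < 0 there is a constant C > 0 (depending only on h, α and s₀) such that for all s ≤ s₀ and all x ∈ (0,1/2]: exp(2sμ(x)) · ∫_{2x}^1 exp(−2sμ(y)) dy ≤ (C/|s|) · x^α. -/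
open MeasureTheory Set Real

set_option maxHeartbeats 1000000

/-- The far-from-diagonal estimate in the proof of Lemma 3.1(ii):
for `s ≤ s₀ < 0`, `exp(2sμ(x)) ∫_{2x}^1 exp(−2sμ(y)) dy ≤ (C/|s|) x^α`. -/
theorem stmt_3 (α : ℝ) (hα : 1 < α) (h : ℝ → ℝ)
    (hpos : ∀ x ∈ Ioc (0:ℝ) 1, 0 < h x)
    (hmono : ∀ x ∈ Ioc (0:ℝ) 1, ∀ y ∈ Ioc (0:ℝ) 1, x ≤ y → h x ≤ h y)
    (hbound : ∀ x ∈ Ioc (0:ℝ) 1, h x ≤ x ^ α)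
    (μ : ℝ → ℝ) (hμ : ∀ x, μ x = ∫ t in x..1, 1 / h t)
    (s₀ : ℝ) (hs₀ : s₀ < 0) :
    ∃ C > (0:ℝ), ∀ s ≤ s₀, ∀ x ∈ Ioc (0:ℝ) (1/2),
      Real.exp (2 * s * μ x) * ∫ y in (2*x)..1, Real.exp (-(2 * s * μ y)) ≤
        (C / |s|) * x ^ α := by
  have hα1 : (0:ℝ) < α - 1 := by linarith
  have hint : ∀ a b : ℝ, 0 < a → a ≤ b → b ≤ 1 →
      IntervalIntegrable (fun t => 1 / h t) volume a b := by
    intro a b ha hab hb1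
    apply AntitoneOn.intervalIntegrable
    rw [Set.uIcc_of_le hab]
    intro u hu v hv huv
    have hu' : u ∈ Ioc (0:ℝ) 1 := ⟨lt_of_lt_of_le ha hu.1, hu.2.trans hb1⟩
    have hv' : v ∈ Ioc (0:ℝ) 1 := ⟨lt_of_lt_of_le ha hv.1, hv.2.trans hb1⟩
    exact one_div_le_one_div_of_le (hpos u hu') (hmono u hu' v hv' huv)
  have hdiff : ∀ a b : ℝ, 0 < a → a ≤ b → b ≤ 1 →
      μ a = (∫ t in a..b, 1 / h t) + μ b := by
    intro a b ha hab hb1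
    rw [hμ a, hμ b,
      intervalIntegral.integral_add_adjacent_intervals (hint a b ha hab hb1)
        (hint b 1 (lt_of_lt_of_le ha hab) hb1 le_rfl)]
  have hnn : ∀ a b : ℝ, 0 < a → a ≤ b → b ≤ 1 → 0 ≤ ∫ t in a..b, 1 / h t := by
    intro a b ha hab hb1
    apply intervalIntegral.integral_nonneg hab
    intro u hu
    exact le_of_lt (one_div_pos.mpr (hpos u ⟨lt_of_lt_of_le ha hu.1, hu.2.trans hb1⟩))
  have hμmono : ∀ a b : ℝ, 0 < a → a ≤ b → b ≤ 1 → μ b ≤ μ a := by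
    intro a b ha hab hb1
    rw [hdiff a b ha hab hb1]
    linarith [hnn a b ha hab hb1]
  have hexpinv : ∀ u : ℝ, 0 < u → Real.exp (-u) ≤ 1 / u := by
    intro u hu
    rw [Real.exp_neg, inv_eq_one_div]
    exact one_div_le_one_div_of_le hu (by linarith [Real.add_one_le_exp u])
  set n : ℕ := ⌈α / (α - 1)⌉₊ with hn
  have hnα : α ≤ (n : ℝ) * (α - 1) := by
    have h1 := Nat.le_ceil (α / (α - 1))
    calc α = α / (α - 1) * (α - 1) := by field_simp
      _ ≤ (n : ℝ) * (α - 1) := mul_le_mul_of_nonneg_right h1 hα1.le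
  set c : ℝ := (2:ℝ) ^ (1 - α) with hc
  have hcpos : (0:ℝ) < c := Real.rpow_pos_of_pos two_pos _
  have hs₀' : (0:ℝ) < |s₀| := abs_pos.mpr hs₀.ne
  set b₀ : ℝ := c * |s₀| / 2 with hb₀
  have hb₀pos : 0 < b₀ := by positivity
  refine ⟨(2 / c) * ((Nat.factorial n : ℝ) / b₀ ^ n), by positivity, ?_⟩
  intro s hs x hx
  obtain ⟨hx0, hx2⟩ := hx
  have hsneg : s < 0 := lt_of_le_of_lt hs hs₀
  have habs : |s| = -s := abs_of_neg hsneg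
  have hxs : (0:ℝ) < |s| := abs_pos.mpr hsneg.ne
  have h2x0 : 0 < 2 * x := by linarith
  have h2x1 : 2 * x ≤ 1 := by linarith
  have hx1 : x ≤ 1 := by linarith
  have hμx2x : μ x = (∫ t in x..2*x, 1 / h t) + μ (2*x) :=
    hdiff x (2*x) hx0 (by linarith) h2x1
  set Δ : ℝ := ∫ t in x..2*x, 1 / h t with hΔ
  -- Step 1: bound the integral by the value at the left endpoint
  have hI : (∫ y in (2*x)..1, Real.exp (-(2 * s * μ y))) ≤ Real.exp (-(2 * s * μ (2*x))) := by
    have hb : ∀ y ∈ Set.uIoc (2*x) 1, ‖Real.exp (-(2 * s * μ y))‖ ≤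
        Real.exp (-(2 * s * μ (2*x))) := by
      intro y hy
      rw [Set.uIoc_of_le h2x1] at hy
      rw [Real.norm_eq_abs, abs_of_pos (Real.exp_pos _), Real.exp_le_exp]
      have hμy : μ y ≤ μ (2*x) := hμmono (2*x) y h2x0 hy.1.le hy.2
      nlinarith [mul_le_mul_of_nonpos_left hμy (by linarith : 2*s ≤ 0)]
    calc (∫ y in (2*x)..1, Real.exp (-(2 * s * μ y)))
        ≤ |∫ y in (2*x)..1, Real.exp (-(2 * s * μ y))| := le_abs_self _
      _ ≤ Real.exp (-(2 * s * μ (2*x))) * |1 - 2*x| := by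
          simpa [Real.norm_eq_abs] using
            intervalIntegral.norm_integral_le_of_norm_le_const hb
      _ ≤ Real.exp (-(2 * s * μ (2*x))) * 1 := by
          apply mul_le_mul_of_nonneg_left _ (Real.exp_pos _).le
          rw [abs_of_nonneg (by linarith)]; linarith
      _ = _ := mul_one _
  -- Step 2: lower bound on Δ
  have h2xmem : (2*x) ∈ Ioc (0:ℝ) 1 := ⟨h2x0, h2x1⟩
  have hΔlb : c / 2 * x ^ (1 - α) ≤ Δ := by
    have hconst : x * (1 / h (2*x)) ≤ Δ := by
      have hmon := intervalIntegral.integral_mono_on (μ := volume) (by linarith : x ≤ 2*x)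
        (intervalIntegrable_const (c := 1 / h (2*x)))
        (hint x (2*x) hx0 (by linarith) h2x1)
        (fun t ht => one_div_le_one_div_of_le
          (hpos t ⟨lt_of_lt_of_le hx0 ht.1, ht.2.trans h2x1⟩)
          (hmono t ⟨lt_of_lt_of_le hx0 ht.1, ht.2.trans h2x1⟩ (2*x) h2xmem ht.2))
      have : (∫ _t in x..(2*x), (1 / h (2*x)) ∂volume) = x * (1 / h (2*x)) := by
        rw [intervalIntegral.integral_const, smul_eq_mul]; ring
      linarith [hmon, this.symm.le]
    have hhx : x * (1 / (2*x) ^ α) ≤ x * (1 / h (2*x)) := by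
      have := one_div_le_one_div_of_le (hpos (2*x) h2xmem) (hbound (2*x) h2xmem)
      exact mul_le_mul_of_nonneg_left this hx0.le
    have hxpow : x * (1 / (2*x) ^ α) = c / 2 * x ^ (1 - α) := by
      rw [Real.mul_rpow (by norm_num) hx0.le, hc, Real.rpow_sub two_pos, Real.rpow_one,
        Real.rpow_sub hx0, Real.rpow_one]
      have h2α : ((2:ℝ) ^ α) ≠ 0 := (Real.rpow_pos_of_pos two_pos α).ne'
      have hxα : (x ^ α) ≠ 0 := (Real.rpow_pos_of_pos hx0 α).ne'
      field_simp
    linarith [hxpow ▸ hhx]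
  -- Step 3: combine exponentials
  have key : Real.exp (2*s*μ x) * Real.exp (-(2*s*μ (2*x))) = Real.exp (2*s*Δ) := by
    rw [← Real.exp_add]; congr 1; rw [hμx2x]; ring
  have hexpΔ : Real.exp (2*s*Δ) ≤ Real.exp (s * (c * x ^ (1-α))) := by
    rw [Real.exp_le_exp]
    calc 2*s*Δ ≤ 2*s*(c / 2 * x ^ (1-α)) :=
          mul_le_mul_of_nonpos_left hΔlb (by linarith : 2*s ≤ 0)
      _ = s * (c * x ^ (1-α)) := by ring
  set t : ℝ := |s| * (c * x ^ (1-α)) with ht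
  have hst : s * (c * x ^ (1-α)) = -(t/2) + -(t/2) := by rw [ht, habs]; ring
  have hx1α : (1:ℝ) ≤ x ^ (1-α) :=
    Real.one_le_rpow_of_pos_of_le_one_of_nonpos hx0 hx1 (by linarith)
  have hA : Real.exp (-(t/2)) ≤ 2 / (c * |s|) := by
    have ht2 : c * |s| / 2 ≤ t / 2 := by
      have := mul_le_mul_of_nonneg_left hx1α (by positivity : (0:ℝ) ≤ c * |s|)
      rw [ht]; nlinarith
    calc Real.exp (-(t/2)) ≤ Real.exp (-(c*|s|/2)) := by
          rw [Real.exp_le_exp]; linarith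
      _ ≤ 1 / (c*|s|/2) := hexpinv _ (by positivity)
      _ = 2 / (c * |s|) := by field_simp
  have hB : Real.exp (-(t/2)) ≤ (Nat.factorial n : ℝ) / b₀ ^ n * x ^ α := by
    have hss : |s₀| ≤ |s| := by rw [habs, abs_of_neg hs₀]; linarith
    have htb : b₀ * x ^ (1-α) ≤ t / 2 := by
      have := mul_le_mul_of_nonneg_right (mul_le_mul_of_nonneg_left hss hcpos.le)
        (Real.rpow_nonneg hx0.le (1-α))
      rw [ht, hb₀]; nlinarith
    have hu : 0 < b₀ * x ^ (1-α) := by positivity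
    calc Real.exp (-(t/2)) ≤ Real.exp (-(b₀ * x ^ (1-α))) := by
          rw [Real.exp_le_exp]; linarith
      _ ≤ (Nat.factorial n : ℝ) / (b₀ * x ^ (1-α)) ^ n := by
          rw [Real.exp_neg, inv_eq_one_div]
          calc 1 / Real.exp (b₀ * x ^ (1-α))
              ≤ 1 / ((b₀ * x ^ (1-α)) ^ n / Nat.factorial n) :=
                one_div_le_one_div_of_le (by positivity)
                  (Real.pow_div_factorial_le_exp _ hu.le n)
            _ = (Nat.factorial n : ℝ) / (b₀ * x ^ (1-α)) ^ n := by
                rw [one_div_div]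
      _ = (Nat.factorial n : ℝ) / b₀ ^ n * x ^ ((n:ℝ) * (α-1)) := by
          rw [mul_pow, ← Real.rpow_natCast (x ^ (1-α)) n, ← Real.rpow_mul hx0.le,
            show (n:ℝ) * (α-1) = -((1-α)*(n:ℝ)) by ring, Real.rpow_neg hx0.le]
          have h1 : (x ^ ((1-α)*(n:ℝ))) ≠ 0 := (Real.rpow_pos_of_pos hx0 _).ne'
          have h2 : b₀ ^ n ≠ 0 := by positivity
          field_simp
      _ ≤ (Nat.factorial n : ℝ) / b₀ ^ n * x ^ α := by
          apply mul_le_mul_of_nonneg_left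
            (Real.rpow_le_rpow_of_exponent_ge hx0 hx1 hnα) (by positivity)
  -- Final assembly
  calc Real.exp (2 * s * μ x) * ∫ y in (2*x)..1, Real.exp (-(2 * s * μ y))
      ≤ Real.exp (2 * s * μ x) * Real.exp (-(2 * s * μ (2*x))) :=
        mul_le_mul_of_nonneg_left hI (Real.exp_pos _).le
    _ = Real.exp (2*s*Δ) := key
    _ ≤ Real.exp (s * (c * x ^ (1-α))) := hexpΔ
    _ = Real.exp (-(t/2)) * Real.exp (-(t/2)) := by rw [← Real.exp_add, hst]
    _ ≤ (2 / (c * |s|)) * ((Nat.factorial n : ℝ) / b₀ ^ n * x ^ α) :=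
        mul_le_mul hA hB (Real.exp_pos _).le (by positivity)
    _ = ((2 / c) * ((Nat.factorial n : ℝ) / b₀ ^ n) / |s|) * x ^ α := by
        field_simp
end

section
/- Let α > 1, β > −α, 0 < ε ≤ 1, and let h : (0,1] → ℝ be positive, monotone increasing, with h(x) ≤ x^α for all x ∈ (0,1]. Then for every s > 0 and every x ∈ (0,ε): ∫_0^x x^β · exp(−s ∫_y^x dt/h(t)) dy ≤ ε^{α+β}/s. -/
open MeasureTheory Set Real

/-- Row-sum bound in the Schur test of Lemma 3.2:
`∫_0^x x^β exp(−s ∫_y^x dt/h(t)) dy ≤ ε^{α+β}/s` for `s > 0`. -/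
theorem stmt_5 (α β ε : ℝ) (hα : 1 < α) (hβ : -α < β) (hε : 0 < ε) (hε1 : ε ≤ 1)
    (h : ℝ → ℝ)
    (hpos : ∀ x ∈ Ioc (0:ℝ) 1, 0 < h x)
    (hmono : ∀ x ∈ Ioc (0:ℝ) 1, ∀ y ∈ Ioc (0:ℝ) 1, x ≤ y → h x ≤ h y)
    (hbound : ∀ x ∈ Ioc (0:ℝ) 1, h x ≤ x ^ α)
    (s : ℝ) (hs : 0 < s) (x : ℝ) (hx : x ∈ Ioo 0 ε) :
    ∫ y in Ioo 0 x, x ^ β * Real.exp (-(s * ∫ t in y..x, 1 / h t)) ≤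
      ε ^ (α + β) / s := by
  obtain ⟨hx0, hxε⟩ := hx
  have hx1 : x ≤ 1 := le_trans hxε.le hε1
  have hxa : (0:ℝ) < x ^ α := rpow_pos_of_pos hx0 α
  set c : ℝ := (x ^ α)⁻¹ with hc_def
  have hc : 0 < c := inv_pos.2 hxa
  have hxb : (0:ℝ) ≤ x ^ β := (rpow_pos_of_pos hx0 β).le
  set k : ℝ := s * c with hk_def
  have hk : 0 < k := mul_pos hs hc
  -- key lower bound on the inner integral
  have key : ∀ y ∈ Ioo (0:ℝ) x, (x - y) * c ≤ ∫ t in y..x, 1 / h t := by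
    intro y hy
    have hyx : y ≤ x := hy.2.le
    have hsub : Icc y x ⊆ Ioc (0:ℝ) 1 := fun t ht => ⟨lt_of_lt_of_le hy.1 ht.1, le_trans ht.2 hx1⟩
    have hint : IntervalIntegrable (fun t => 1 / h t) volume y x := by
      apply AntitoneOn.intervalIntegrable
      rw [uIcc_of_le hyx]
      intro t1 ht1 t2 ht2 hle
      exact one_div_le_one_div_of_le (hpos t1 (hsub ht1))
        (hmono t1 (hsub ht1) t2 (hsub ht2) hle)
    have h1 : (x - y) * c = ∫ _t in y..x, c := by
      rw [intervalIntegral.integral_const, smul_eq_mul]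
    rw [h1]
    apply intervalIntegral.integral_mono_on hyx intervalIntegrable_const hint
    intro t ht
    have htm : h t ≤ x ^ α :=
      le_trans (hmono t (hsub ht) x ⟨hx0, hx1⟩ ht.2) (hbound x ⟨hx0, hx1⟩)
    have := one_div_le_one_div_of_le (hpos t (hsub ht)) htm
    rwa [one_div (x ^ α)] at this
  -- majorant
  set g : ℝ → ℝ := fun y => x ^ β * Real.exp (-(s * ((x - y) * c))) with hg_def
  have hgcont : Continuous g := by
    apply Continuous.mul continuous_const
    exact Real.continuous_exp.comp (by continuity)
  have hgint : IntegrableOn g (Ioo 0 x) := by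
    exact (hgcont.integrableOn_Icc).mono_set Ioo_subset_Icc_self
  have step1 : (∫ y in Ioo 0 x, x ^ β * Real.exp (-(s * ∫ t in y..x, 1 / h t)))
      ≤ ∫ y in Ioo 0 x, g y := by
    apply integral_mono_of_nonneg
    · exact Filter.Eventually.of_forall fun y => mul_nonneg hxb (Real.exp_pos _).le
    · exact hgint
    · rw [Filter.EventuallyLE, ae_restrict_iff' measurableSet_Ioo]
      apply Filter.Eventually.of_forall
      intro y hy
      apply mul_le_mul_of_nonneg_left _ hxb
      apply Real.exp_le_exp.2
      apply neg_le_neg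
      exact mul_le_mul_of_nonneg_left (key y hy) hs.le
  -- compute the majorant integral
  have hval : (∫ y in Ioo 0 x, g y) = x ^ β * (Real.exp (-(k * x)) * (k⁻¹ * (Real.exp (k * x) - 1))) := by
    rw [← MeasureTheory.integral_Ioc_eq_integral_Ioo, ← intervalIntegral.integral_of_le hx0.le]
    have : ∀ y : ℝ, g y = (x ^ β * Real.exp (-(k * x))) * Real.exp (k * y) := by
      intro y
      simp only [hg_def, hk_def]
      rw [mul_assoc, ← Real.exp_add]
      ring_nf
    simp only [this]
    rw [intervalIntegral.integral_const_mul]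
    have hI : (∫ y in (0:ℝ)..x, Real.exp (k * y)) = k⁻¹ * (Real.exp (k * x) - 1) := by
      rw [intervalIntegral.integral_comp_mul_left (fun t => Real.exp t) hk.ne']
      rw [integral_exp, mul_zero, Real.exp_zero, smul_eq_mul]
    rw [hI]; ring
  have step2 : x ^ β * (Real.exp (-(k * x)) * (k⁻¹ * (Real.exp (k * x) - 1)))
      ≤ x ^ β * k⁻¹ := by
    apply mul_le_mul_of_nonneg_left _ hxb
    have h2 : Real.exp (-(k * x)) * (Real.exp (k * x) - 1) = 1 - Real.exp (-(k * x)) := by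
      rw [mul_sub, mul_one, ← Real.exp_add]
      simp
    rw [show Real.exp (-(k * x)) * (k⁻¹ * (Real.exp (k * x) - 1))
        = k⁻¹ * (Real.exp (-(k * x)) * (Real.exp (k * x) - 1)) by ring, h2]
    have h1 : 1 - Real.exp (-(k * x)) ≤ 1 := by
      have := (Real.exp_pos (-(k * x))).le; linarith
    calc k⁻¹ * (1 - Real.exp (-(k * x))) ≤ k⁻¹ * 1 :=
          mul_le_mul_of_nonneg_left h1 (inv_pos.2 hk).le
      _ = k⁻¹ := mul_one _
  have hkinv : k⁻¹ = x ^ α / s := by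
    rw [hk_def, hc_def, mul_inv, inv_inv]
    ring
  have step3 : x ^ β * k⁻¹ ≤ ε ^ (α + β) / s := by
    rw [hkinv]
    have : x ^ β * (x ^ α / s) = x ^ (α + β) / s := by
      rw [rpow_add hx0]; ring
    rw [this]
    exact div_le_div_of_nonneg_right (rpow_le_rpow hx0.le hxε.le (by linarith)) hs.le
  calc _ ≤ ∫ y in Ioo 0 x, g y := step1
    _ = _ := hval
    _ ≤ x ^ β * k⁻¹ := step2
    _ ≤ _ := step3
end

section
/- Let α > 1, β > −α, 0 < ε ≤ 1, and let h : (0,1] → ℝ be positive, monotone increasing, with h(x) ≤ x^α for all x ∈ (0,1]. Then for every s > 0 and every y ∈ (0,ε): ∫_y^ε x^β · exp(−s ∫_y^x dt/h(t)) dx ≤ ε^{α+β}/s. -/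
open MeasureTheory Set Real

/-!
Since `h x ≤ x ^ α`, the weight `1 / h` dominates `t ^ (-α)`, so the exponential factor is at
most `exp (-s ∫_y^x t^(-α) dt)`; and `x ^ β ≤ ε ^ (α + β) x ^ (-α)` because `α + β > 0`.
The resulting majorant is `ε ^ (α + β)` times `g x exp (-s ∫_y^x g)` with `g = t ^ (-α)`, the exact
derivative of `-exp (-s ∫_y^x g) / s`, whose integral over `[y, ε]` is at most `1 / s`.
Comparing with the continuous weight `t ^ (-α)` rather than the merely monotone `1 / h` is what
makes the fundamental theorem of calculus applicable.
-/

theorem IntervalIntegrable.continuousOn_primitive_Icc {f : ℝ → ℝ} {a b : ℝ} (hab : a ≤ b)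
    (hf : IntervalIntegrable f volume a b) :
    ContinuousOn (fun x => ∫ t in a..x, f t) (Icc a b) := by
  simpa only [uIcc_of_le hab] using intervalIntegral.continuousOn_primitive_interval' hf
    left_mem_uIcc

theorem integral_mul_exp_neg_mul_primitive_le {g : ℝ → ℝ} {a b s : ℝ} (hab : a ≤ b) (hs : 0 < s)
    (hg : ContinuousOn g (Icc a b)) :
    ∫ x in a..b, g x * exp (-(s * ∫ t in a..x, g t)) ≤ 1 / s := by
  set G : ℝ → ℝ := fun x => ∫ t in a..x, g t
  have hG : ContinuousOn G (Icc a b) :=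
    (hg.intervalIntegrable_of_Icc hab).continuousOn_primitive_Icc hab
  have hG' : ∀ x ∈ Ioo a b, HasDerivAt G (g x) x := fun x hx =>
    intervalIntegral.integral_hasDerivAt_right
      ((hg.mono (Icc_subset_Icc le_rfl hx.2.le)).intervalIntegrable_of_Icc hx.1.le)
      ((hg.mono Ioo_subset_Icc_self).stronglyMeasurableAtFilter isOpen_Ioo x hx)
      (hg.continuousAt (Icc_mem_nhds hx.1 hx.2))
  have hprim : ∀ x ∈ Ioo a b,
      HasDerivAt (fun x => -exp (-(s * G x)) / s) (g x * exp (-(s * G x))) x := by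
    intro x hx
    refine (((((hG' x hx).const_mul s).neg).exp).neg.div_const s).congr_deriv ?_
    simp only [Pi.neg_apply]
    field_simp
  have hFTC : ∫ x in a..b, g x * exp (-(s * G x)) =
      -exp (-(s * G b)) / s - -exp (-(s * G a)) / s :=
    intervalIntegral.integral_eq_sub_of_hasDerivAt_of_le hab (by fun_prop) hprim
      (ContinuousOn.intervalIntegrable_of_Icc hab (by fun_prop))
  have hGa : G a = 0 := intervalIntegral.integral_same
  calc ∫ x in a..b, g x * exp (-(s * G x))
      = (1 - exp (-(s * G b))) / s := by rw [hFTC, hGa, mul_zero, neg_zero, exp_zero]; ring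
    _ ≤ 1 / s := by gcongr; linarith [exp_pos (-(s * G b))]

theorem MonotoneOn.intervalIntegrable_one_div {h : ℝ → ℝ} {a b : ℝ} (hab : a ≤ b)
    (hpos : ∀ x ∈ Icc a b, 0 < h x) (hmono : MonotoneOn h (Icc a b)) :
    IntervalIntegrable (fun x => 1 / h x) volume a b :=
  AntitoneOn.intervalIntegrable <| (uIcc_of_le hab).symm ▸ fun _ hu _ hv huv =>
    one_div_le_one_div_of_le (hpos _ hu) (hmono hu hv huv)

theorem integral_rpow_neg_le_integral_one_div {h : ℝ → ℝ} {α a b : ℝ} (ha : 0 < a) (hab : a ≤ b)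
    (hpos : ∀ x ∈ Icc a b, 0 < h x) (hmono : MonotoneOn h (Icc a b))
    (hbound : ∀ x ∈ Icc a b, h x ≤ x ^ α) :
    ∫ t in a..b, t ^ (-α) ≤ ∫ t in a..b, 1 / h t := by
  refine intervalIntegral.integral_mono_on hab ?_ ?_ fun x hx => ?_
  · exact ContinuousOn.intervalIntegrable_of_Icc hab <|
      continuousOn_id.rpow_const fun x hx => Or.inl (ha.trans_le hx.1).ne'
  · exact hmono.intervalIntegrable_one_div hab hpos
  · rw [rpow_neg (ha.trans_le hx.1).le, ← one_div]
    exact one_div_le_one_div_of_le (hpos x hx) (hbound x hx)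

theorem rpow_mul_exp_neg_le {α β x ε s F G : ℝ} (hx : 0 < x) (hxε : x ≤ ε) (hαβ : 0 ≤ α + β)
    (hs : 0 ≤ s) (hGF : G ≤ F) :
    x ^ β * exp (-(s * F)) ≤ ε ^ (α + β) * (x ^ (-α) * exp (-(s * G))) := by
  calc x ^ β * exp (-(s * F)) ≤ x ^ β * exp (-(s * G)) := by gcongr
    _ = x ^ (α + β) * (x ^ (-α) * exp (-(s * G))) := by
      rw [← mul_assoc, ← rpow_add hx, add_neg_cancel_comm]
    _ ≤ ε ^ (α + β) * (x ^ (-α) * exp (-(s * G))) := by gcongr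

theorem stmt_6_general (α β ε : ℝ) (hβ : -α < β) (hε1 : ε ≤ 1)
    (h : ℝ → ℝ)
    (hpos : ∀ x ∈ Ioc (0:ℝ) 1, 0 < h x)
    (hmono : ∀ x ∈ Ioc (0:ℝ) 1, ∀ y ∈ Ioc (0:ℝ) 1, x ≤ y → h x ≤ h y)
    (hbound : ∀ x ∈ Ioc (0:ℝ) 1, h x ≤ x ^ α)
    (s : ℝ) (hs : 0 < s) (y : ℝ) (hy : y ∈ Ioo 0 ε) :
    ∫ x in y..ε, x ^ β * Real.exp (-(s * ∫ t in y..x, 1 / h t)) ≤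
      ε ^ (α + β) / s := by
  obtain ⟨hy0, hyε⟩ := hy
  have hIcc : Icc y ε ⊆ Ioc 0 1 := fun _ ht => ⟨hy0.trans_le ht.1, ht.2.trans hε1⟩
  have hpos' : ∀ x ∈ Icc y ε, 0 < h x := fun x hx => hpos x (hIcc hx)
  have hmono' : MonotoneOn h (Icc y ε) := fun u hu v hv => hmono u (hIcc hu) v (hIcc hv)
  have hprimitive : ∀ x ∈ Icc y ε, ∫ t in y..x, t ^ (-α) ≤ ∫ t in y..x, 1 / h t := fun x hx =>
    have hsub := Icc_subset_Icc_right hx.2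
    integral_rpow_neg_le_integral_one_div hy0 hx.1 (fun t ht => hpos' t (hsub ht))
      (hmono'.mono hsub) (fun t ht => hbound t (hIcc (hsub ht)))
  have hrpow : ∀ γ : ℝ, ContinuousOn (fun x : ℝ => x ^ γ) (Icc y ε) := fun γ =>
    continuousOn_id.rpow_const fun x hx => Or.inl (hy0.trans_le hx.1).ne'
  have hF : ContinuousOn (fun x => ∫ t in y..x, 1 / h t) (Icc y ε) :=
    (hmono'.intervalIntegrable_one_div hyε.le hpos').continuousOn_primitive_Icc hyε.le
  have hG : ContinuousOn (fun x => ∫ t in y..x, t ^ (-α)) (Icc y ε) :=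
    ((hrpow _).intervalIntegrable_of_Icc hyε.le).continuousOn_primitive_Icc hyε.le
  calc ∫ x in y..ε, x ^ β * exp (-(s * ∫ t in y..x, 1 / h t))
      ≤ ∫ x in y..ε, ε ^ (α + β) * (x ^ (-α) * exp (-(s * ∫ t in y..x, t ^ (-α)))) := by
        refine intervalIntegral.integral_mono_on hyε.le ?_ ?_ fun x hx =>
          rpow_mul_exp_neg_le (hy0.trans_le hx.1) hx.2 (by linarith) hs.le (hprimitive x hx)
        · exact ContinuousOn.intervalIntegrable_of_Icc hyε.le ((hrpow β).mul (by fun_prop))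
        · exact ContinuousOn.intervalIntegrable_of_Icc hyε.le
            (continuousOn_const.mul ((hrpow _).mul (by fun_prop)))
    _ = ε ^ (α + β) * ∫ x in y..ε, x ^ (-α) * exp (-(s * ∫ t in y..x, t ^ (-α))) :=
        intervalIntegral.integral_const_mul _ _
    _ ≤ ε ^ (α + β) * (1 / s) := mul_le_mul_of_nonneg_left
        (integral_mul_exp_neg_mul_primitive_le hyε.le hs (hrpow _))
        (rpow_nonneg (hy0.trans hyε).le _)
    _ = ε ^ (α + β) / s := mul_one_div _ _

/-- Column-sum bound in the Schur test of Lemma 3.2: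
`∫_y^ε x^β exp(−s ∫_y^x dt/h(t)) dx ≤ ε^{α+β}/s` for `s > 0`. -/
theorem stmt_6 (α β ε : ℝ) (hα : 1 < α) (hβ : -α < β) (hε : 0 < ε) (hε1 : ε ≤ 1)
    (h : ℝ → ℝ)
    (hpos : ∀ x ∈ Ioc (0:ℝ) 1, 0 < h x)
    (hmono : ∀ x ∈ Ioc (0:ℝ) 1, ∀ y ∈ Ioc (0:ℝ) 1, x ≤ y → h x ≤ h y)
    (hbound : ∀ x ∈ Ioc (0:ℝ) 1, h x ≤ x ^ α)
    (s : ℝ) (hs : 0 < s) (y : ℝ) (hy : y ∈ Ioo 0 ε) :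
    ∫ x in y..ε, x ^ β * Real.exp (-(s * ∫ t in y..x, 1 / h t)) ≤
      ε ^ (α + β) / s :=
  stmt_6_general α β ε hβ hε1 h hpos hmono hbound s hs y hy
end

section
/- Let α > 1, β > −α, 0 < ε ≤ 1, and let h : (0,1] → ℝ be positive, monotone increasing, with h(x) ≤ x^α for all x ∈ (0,1]. Then for every s₀ > 0 there exists a constant C = C(h, α, β, s₀) such that for all s ≥ s₀ and all y ∈ (0,ε): y^β · ∫_y^ε exp(−s ∫_y^x dt/h(t)) dx ≤ C · ε^{α+β}/s. -/
open MeasureTheory Set Real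

open scoped Nat

/-! With `F x = ∫ t in y..x, 1 / h t`, the bound `h t ≤ t ^ α ≤ x ^ α` makes `F` grow at rate at
least `x ^ (-α)`. On `[y, 2y]` this gives `F x ≥ (x - y) / (2y) ^ α`, so that part of the integral
is at most `(2y) ^ α / s`, and `y ^ β (2y) ^ α ≤ 2 ^ α ε ^ (α + β)`. On `[2y, ε]` it gives
`F x ≥ y ^ (1 - α) / 2 ^ α + (x - 2y) / ε ^ α`, so that part is at most
`exp (-s y ^ (1 - α) / 2 ^ α) ε ^ α / s`; the exponential factor absorbs `y ^ β` uniformly in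
`s ≥ s₀` because `exp (-t) ≤ n! / t ^ n` with `n (α - 1) ≥ -β`. -/

lemma exp_neg_le_factorial_div_pow {t : ℝ} (ht : 0 < t) (n : ℕ) : exp (-t) ≤ n ! / t ^ n := by
  rw [exp_neg, inv_le_comm₀ (exp_pos t) (by positivity), inv_div]
  exact pow_div_factorial_le_exp t ht.le n

lemma integral_exp_neg_le_of_affine_le {f : ℝ → ℝ} {a b c k : ℝ} (hab : a ≤ b) (hk : 0 < k)
    (hf : IntervalIntegrable (fun x => exp (-f x)) volume a b)
    (hle : ∀ x ∈ Icc a b, c + k * (x - a) ≤ f x) :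
    ∫ x in a..b, exp (-f x) ≤ exp (-c) / k := by
  have hderiv : ∀ x ∈ uIcc a b, HasDerivAt (fun x => -exp (-(c + k * (x - a))) / k)
      (exp (-(c + k * (x - a)))) x := by
    intro x _
    have h : HasDerivAt (fun x => -(c + k * (x - a))) (-k) x :=
      ((((hasDerivAt_id' x).sub_const a).const_mul k).const_add c).neg.congr_deriv (by ring)
    exact (h.exp.neg.div_const k).congr_deriv (by field_simp)
  have hcont : Continuous fun x => exp (-(c + k * (x - a))) := by fun_prop
  calc ∫ x in a..b, exp (-f x) ≤ ∫ x in a..b, exp (-(c + k * (x - a))) :=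
        intervalIntegral.integral_mono_on hab hf (hcont.intervalIntegrable a b)
          fun x hx => exp_le_exp.2 (neg_le_neg (hle x hx))
    _ = (exp (-c) - exp (-(c + k * (b - a)))) / k := by
        rw [intervalIntegral.integral_eq_sub_of_hasDerivAt hderiv (hcont.intervalIntegrable a b)]
        simp only [sub_self, mul_zero, add_zero]
        ring
    _ ≤ exp (-c) / k := by gcongr; exact sub_le_self _ (exp_pos _).le

lemma rpow_mul_exp_neg_div_rpow_le {β p c y ε : ℝ} {n : ℕ} (hp : 0 ≤ p) (hc : 0 < c)
    (hn : 0 ≤ β + p * n) (hy : 0 < y) (hyε : y ≤ ε) (hε1 : ε ≤ 1) :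
    y ^ β * exp (-(c / y ^ p)) ≤ n ! / c ^ n * ε ^ β := by
  have hε : 0 < ε := hy.trans_le hyε
  calc y ^ β * exp (-(c / y ^ p)) ≤ y ^ β * (n ! / (c / y ^ p) ^ n) := by
        gcongr; exact exp_neg_le_factorial_div_pow (by positivity) n
    _ = n ! / c ^ n * y ^ (β + p * n) := by
        rw [rpow_add hy, rpow_mul_natCast hy.le, div_pow]
        field_simp
    _ ≤ n ! / c ^ n * ε ^ (β + p * n) := by gcongr
    _ = n ! / c ^ n * ε ^ β * ε ^ (p * n) := by rw [rpow_add hε]; ring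
    _ ≤ n ! / c ^ n * ε ^ β := by
        apply mul_le_of_le_one_right (by positivity)
        exact rpow_le_one hε.le hε1 (by positivity)

section Primitive

variable {α y ε s : ℝ} {g : ℝ → ℝ}

lemma IntervalIntegrable.mono_Icc {u v : ℝ} (hg : IntervalIntegrable g volume y ε)
    (hyu : y ≤ u) (huv : u ≤ v) (hvε : v ≤ ε) : IntervalIntegrable g volume u v :=
  hg.mono_set (by
    rw [uIcc_of_le huv, uIcc_of_le (hyu.trans (huv.trans hvε))]
    exact Icc_subset_Icc hyu hvε)

lemma intervalIntegrable_exp_neg_mul_primitive (hg : IntervalIntegrable g volume y ε) :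
    IntervalIntegrable (fun x => exp (-(s * ∫ t in y..x, g t))) volume y ε :=
  ((intervalIntegral.continuousOn_primitive_interval' hg left_mem_uIcc).const_smul s
    |>.neg.rexp).intervalIntegrable

lemma integral_add_sub_div_rpow_le_primitive (hα : 0 ≤ α) (hy : 0 < y)
    (hg : IntervalIntegrable g volume y ε) (hgl : ∀ t ∈ Icc y ε, (t ^ α)⁻¹ ≤ g t)
    {u x : ℝ} (hyu : y ≤ u) (hux : u ≤ x) (hxε : x ≤ ε) :
    (∫ t in y..u, g t) + (x - u) / x ^ α ≤ ∫ t in y..x, g t := by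
  have hgux := hg.mono_Icc hyu hux hxε
  rw [← intervalIntegral.integral_add_adjacent_intervals (hg.mono_Icc le_rfl hyu (hux.trans hxε))
    hgux]
  gcongr
  have hlow : ∀ t ∈ Icc u x, (x ^ α)⁻¹ ≤ g t := fun t ht =>
    calc (x ^ α)⁻¹ ≤ (t ^ α)⁻¹ :=
          inv_anti₀ (rpow_pos_of_pos (hy.trans_le (hyu.trans ht.1)) α)
            (rpow_le_rpow (hy.trans_le (hyu.trans ht.1)).le ht.2 hα)
      _ ≤ g t := hgl t ⟨hyu.trans ht.1, ht.2.trans hxε⟩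
  simpa [div_eq_mul_inv] using
    intervalIntegral.integral_mono_on hux intervalIntegrable_const hgux hlow

lemma integral_exp_neg_mul_primitive_le_of_le_two_mul (hα : 0 ≤ α) (hy : 0 < y)
    (hg : IntervalIntegrable g volume y ε) (hgl : ∀ t ∈ Icc y ε, (t ^ α)⁻¹ ≤ g t) (hs : 0 < s)
    {z : ℝ} (hyz : y ≤ z) (hzε : z ≤ ε) (hz : z ≤ 2 * y) :
    ∫ x in y..z, exp (-(s * ∫ t in y..x, g t)) ≤ (2 * y) ^ α / s := by
  have h := integral_exp_neg_le_of_affine_le (c := 0) (k := s / (2 * y) ^ α) hyz (by positivity)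
    ((intervalIntegrable_exp_neg_mul_primitive hg).mono_Icc le_rfl hyz hzε) fun x hx => by
      obtain ⟨hyx, hxz⟩ := hx
      have hx0 : 0 < x := hy.trans_le hyx
      have hF := integral_add_sub_div_rpow_le_primitive hα hy hg hgl le_rfl hyx (hxz.trans hzε)
      rw [intervalIntegral.integral_same, zero_add] at hF
      calc 0 + s / (2 * y) ^ α * (x - y) = s * ((x - y) / (2 * y) ^ α) := by ring
        _ ≤ s * ((x - y) / x ^ α) := by
            gcongr s * ?_
            exact div_le_div_of_nonneg_left (by linarith) (rpow_pos_of_pos hx0 α)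
              (rpow_le_rpow hx0.le (hxz.trans hz) hα)
        _ ≤ _ := by gcongr
  simpa using h

lemma integral_exp_neg_mul_primitive_le_of_two_mul_le (hα : 0 ≤ α) (hy : 0 < y)
    (hg : IntervalIntegrable g volume y ε) (hgl : ∀ t ∈ Icc y ε, (t ^ α)⁻¹ ≤ g t) (hs : 0 < s)
    (h2y : 2 * y ≤ ε) :
    ∫ x in (2 * y)..ε, exp (-(s * ∫ t in y..x, g t)) ≤
      exp (-(s / 2 ^ α / y ^ (α - 1))) * ε ^ α / s := by
  have hε : 0 < ε := by linarith
  have hmid : s / 2 ^ α / y ^ (α - 1) = s * ((2 * y - y) / (2 * y) ^ α) := by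
    rw [mul_rpow zero_le_two hy.le, rpow_sub_one hy.ne']
    field_simp
    ring
  have h := integral_exp_neg_le_of_affine_le (k := s / ε ^ α) h2y (by positivity)
    ((intervalIntegrable_exp_neg_mul_primitive hg).mono_Icc (by linarith) h2y le_rfl)
    fun x hx => by
      obtain ⟨h2yx, hxε⟩ := hx
      have hx0 : 0 < x := by linarith
      have hF₁ := integral_add_sub_div_rpow_le_primitive hα hy hg hgl le_rfl (by linarith) h2y
      have hF₂ := integral_add_sub_div_rpow_le_primitive hα hy hg hgl (by linarith) h2yx hxε
      rw [intervalIntegral.integral_same, zero_add] at hF₁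
      calc s / 2 ^ α / y ^ (α - 1) + s / ε ^ α * (x - 2 * y)
          = s * ((2 * y - y) / (2 * y) ^ α + (x - 2 * y) / ε ^ α) := by rw [hmid]; ring
        _ ≤ s * ((∫ t in y..(2 * y), g t) + (x - 2 * y) / x ^ α) := by
            gcongr s * (?_ + ?_)
            exact div_le_div_of_nonneg_left (by linarith) (rpow_pos_of_pos hx0 α)
              (rpow_le_rpow hx0.le hxε hα)
        _ ≤ _ := by gcongr
  rwa [div_div_eq_mul_div] at h

theorem rpow_mul_integral_exp_neg_mul_primitive_le {β s₀ : ℝ} {n : ℕ}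
    (hα : 1 < α) (hαβ : 0 ≤ α + β) (hn : 0 ≤ β + (α - 1) * n) (hε1 : ε ≤ 1) (hy : 0 < y)
    (hyε : y < ε) (hs₀ : 0 < s₀) (hs : s₀ ≤ s) (hg : IntervalIntegrable g volume y ε)
    (hgl : ∀ t ∈ Icc y ε, (t ^ α)⁻¹ ≤ g t) :
    y ^ β * ∫ x in y..ε, exp (-(s * ∫ t in y..x, g t)) ≤
      (2 ^ α + n ! / (s₀ / 2 ^ α) ^ n) * ε ^ (α + β) / s := by
  have hs0 : 0 < s := hs₀.trans_le hs
  have hε : 0 < ε := hy.trans hyε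
  have hα0 : 0 ≤ α := by linarith
  have hyβ : 0 ≤ y ^ β := (rpow_pos_of_pos hy β).le
  have hnear : ∀ z, y ≤ z → z ≤ ε → z ≤ 2 * y →
      y ^ β * ∫ x in y..z, exp (-(s * ∫ t in y..x, g t)) ≤ 2 ^ α * ε ^ (α + β) / s := by
    intro z hyz hzε hz
    calc y ^ β * ∫ x in y..z, exp (-(s * ∫ t in y..x, g t)) ≤ y ^ β * ((2 * y) ^ α / s) := by
          gcongr
          exact integral_exp_neg_mul_primitive_le_of_le_two_mul hα0 hy hg hgl hs0 hyz hzε hz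
      _ = 2 ^ α * y ^ (α + β) / s := by rw [mul_rpow zero_le_two hy.le, rpow_add hy]; ring
      _ ≤ 2 ^ α * ε ^ (α + β) / s := by gcongr
  have hfar : 2 * y ≤ ε → y ^ β * ∫ x in (2 * y)..ε, exp (-(s * ∫ t in y..x, g t)) ≤
      n ! / (s₀ / 2 ^ α) ^ n * ε ^ (α + β) / s := fun h2y =>
    calc y ^ β * ∫ x in (2 * y)..ε, exp (-(s * ∫ t in y..x, g t))
        ≤ y ^ β * (exp (-(s / 2 ^ α / y ^ (α - 1))) * ε ^ α / s) := by
          gcongr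
          exact integral_exp_neg_mul_primitive_le_of_two_mul_le hα0 hy hg hgl hs0 h2y
      _ ≤ y ^ β * exp (-(s₀ / 2 ^ α / y ^ (α - 1))) * ε ^ α / s := by
          rw [mul_div_assoc', mul_assoc]
          gcongr
      _ ≤ n ! / (s₀ / 2 ^ α) ^ n * ε ^ β * ε ^ α / s := by
          gcongr ?_ * _ / _
          exact rpow_mul_exp_neg_div_rpow_le (by linarith) (by positivity) hn hy hyε.le hε1
      _ = n ! / (s₀ / 2 ^ α) ^ n * ε ^ (α + β) / s := by rw [rpow_add hε]; ring
  have hK : 0 ≤ n ! / (s₀ / 2 ^ α) ^ n * ε ^ (α + β) / s := by positivity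
  rw [add_mul, add_div]
  rcases le_or_gt ε (2 * y) with hε2y | h2yε
  · linarith [hnear ε hyε.le le_rfl hε2y]
  · have hI := intervalIntegrable_exp_neg_mul_primitive (s := s) hg
    rw [← intervalIntegral.integral_add_adjacent_intervals
      (hI.mono_Icc le_rfl (by linarith) h2yε.le) (hI.mono_Icc (by linarith) h2yε.le le_rfl),
      mul_add]
    exact add_le_add (hnear (2 * y) (by linarith) h2yε.le le_rfl) (hfar h2yε.le)

end Primitive

theorem stmt_7_general (α β ε : ℝ) (hα : 1 < α) (hβ : -α < β) (hε1 : ε ≤ 1)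
    (h : ℝ → ℝ)
    (hpos : ∀ x ∈ Ioc (0:ℝ) 1, 0 < h x)
    (hmono : ∀ x ∈ Ioc (0:ℝ) 1, ∀ y ∈ Ioc (0:ℝ) 1, x ≤ y → h x ≤ h y)
    (hbound : ∀ x ∈ Ioc (0:ℝ) 1, h x ≤ x ^ α)
    (s₀ : ℝ) (hs₀ : 0 < s₀) :
    ∃ C > (0:ℝ), ∀ s, s₀ ≤ s → ∀ y ∈ Ioo (0:ℝ) ε,
      y ^ β * ∫ x in y..ε, Real.exp (-(s * ∫ t in y..x, 1 / h t)) ≤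
        C * ε ^ (α + β) / s := by
  obtain ⟨n, hn⟩ := exists_nat_ge (-β / (α - 1))
  refine ⟨2 ^ α + n ! / (s₀ / 2 ^ α) ^ n, by positivity, fun s hs y ⟨hy, hyε⟩ => ?_⟩
  have hIcc : Icc y ε ⊆ Ioc 0 1 := fun t ht => ⟨hy.trans_le ht.1, ht.2.trans hε1⟩
  have hanti : AntitoneOn (fun t => 1 / h t) (uIcc y ε) := by
    rw [uIcc_of_le hyε.le]
    exact fun u hu v hv huv => one_div_le_one_div_of_le (hpos u (hIcc hu))
      (hmono u (hIcc hu) v (hIcc hv) huv)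
  refine rpow_mul_integral_exp_neg_mul_primitive_le hα (by linarith) ?_ hε1 hy hyε hs₀ hs
    hanti.intervalIntegrable fun t ht => ?_
  · rw [div_le_iff₀ (by linarith)] at hn
    linarith
  · rw [one_div]
    exact inv_anti₀ (hpos t (hIcc ht)) (hbound t (hIcc ht))

/-- Column-sum bound for the kernel `k₂` in the Schur test of Lemma 3.2:
for `s ≥ s₀ > 0`, `y^β ∫_y^ε exp(−s ∫_y^x dt/h(t)) dx ≤ C ε^{α+β}/s`. -/
theorem stmt_7 (α β ε : ℝ) (hα : 1 < α) (hβ : -α < β) (hε : 0 < ε) (hε1 : ε ≤ 1)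
    (h : ℝ → ℝ)
    (hpos : ∀ x ∈ Ioc (0:ℝ) 1, 0 < h x)
    (hmono : ∀ x ∈ Ioc (0:ℝ) 1, ∀ y ∈ Ioc (0:ℝ) 1, x ≤ y → h x ≤ h y)
    (hbound : ∀ x ∈ Ioc (0:ℝ) 1, h x ≤ x ^ α)
    (s₀ : ℝ) (hs₀ : 0 < s₀) :
    ∃ C > (0:ℝ), ∀ s, s₀ ≤ s → ∀ y ∈ Ioo (0:ℝ) ε,
      y ^ β * ∫ x in y..ε, Real.exp (-(s * ∫ t in y..x, 1 / h t)) ≤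
        C * ε ^ (α + β) / s :=
  stmt_7_general α β ε hα hβ hε1 h hpos hmono hbound s₀ hs₀
end

section
/- Let α > 1, β > −α, 0 < ε ≤ 1, and let h : (0,1] → ℝ be positive, monotone increasing, with h(x) ≤ x^α for all x ∈ (0,1]. Then for every s₀ < 0 there exists a constant C = C(h, α, β, s₀) such that for all s ≤ s₀ and all f ∈ L²(0,ε): ‖x ↦ x^β · ∫_x^ε exp(−s ∫_y^x dt/h(t)) f(y) dy‖_{L²(0,ε)} ≤ (C/|s|) · ε^{α+β} · ‖f‖_{L²(0,ε)}. -/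
/-!
For `s < 0` and `x < y` the hypothesis `h(t) ≤ t^α` dominates the kernel `exp(-s ∫_y^x dt/h)` by
the explicit kernel `K_s(x,y) = exp(s (x^{1-α} - y^{1-α})/(α-1))` of the case `h(t) = t^α`.
The operator with kernel `x^β K_s(x,y) 1_{x<y}` is then bounded on `L²(0,ε)` by the Schur test
with weight `y^β`. Both Schur integrals are explicit because `x^{-α} K_s(x,y)` is, up to the
factor `∓s`, the derivative of `K_s` in either variable: the row integral
`∫_x^ε K_s(x,y) y^β dy` is at most `ε^{α+β}/|s|`, and in the column integral
`∫_0^y x^{2β} K_s(x,y) dx` the factor `x^β`, which blows up at `0` when `β < 0`, is absorbed by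
half of the exponential decay of `K_s`, uniformly in `s ≤ s₀`.
-/

open MeasureTheory Set Real Function
open scoped ENNReal

section Schur

variable {X : Type*} [MeasurableSpace X] {μ : Measure X}

theorem sq_lintegral_mul_le_of_weight {g f w : X → ℝ≥0∞} (hg : AEMeasurable g μ)
    (hf : AEMeasurable f μ) (hw : AEMeasurable w μ) (hw0 : ∀ᵐ y ∂μ, w y ≠ 0)
    (hw_top : ∀ᵐ y ∂μ, w y ≠ ∞) :
    (∫⁻ y, g y * f y ∂μ) ^ 2 ≤
      (∫⁻ y, g y * w y ∂μ) * ∫⁻ y, g y * (w y)⁻¹ * f y ^ 2 ∂μ := by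
  have hsplit : (fun y => g y * f y) =ᵐ[μ]
      fun y => (g y * w y) ^ (1 / 2 : ℝ) * (g y * (w y)⁻¹ * f y ^ 2) ^ (1 / 2 : ℝ) := by
    filter_upwards [hw0, hw_top] with y hy0 hy_top
    rw [← ENNReal.mul_rpow_of_nonneg _ _ (by norm_num),
      show g y * w y * (g y * (w y)⁻¹ * f y ^ 2) = (g y * f y) ^ 2 by
        rw [mul_pow, sq (g y)]
        calc g y * w y * (g y * (w y)⁻¹ * f y ^ 2)
            = g y * g y * f y ^ 2 * (w y * (w y)⁻¹) := by ring
          _ = _ := by rw [ENNReal.mul_inv_cancel hy0 hy_top, mul_one],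
      ← ENNReal.rpow_natCast, ← ENNReal.rpow_mul]
    norm_num
  have hCS := ENNReal.lintegral_mul_norm_pow_le (μ := μ) (hg.mul hw)
    ((hg.mul hw.inv).mul (hf.pow_const 2)) (p := 1 / 2) (q := 1 / 2) (by norm_num) (by norm_num)
    (by norm_num)
  rw [lintegral_congr_ae hsplit]
  calc (∫⁻ y, (g y * w y) ^ (1 / 2 : ℝ) * (g y * (w y)⁻¹ * f y ^ 2) ^ (1 / 2 : ℝ) ∂μ) ^ 2
      ≤ ((∫⁻ y, g y * w y ∂μ) ^ (1 / 2 : ℝ) *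
          (∫⁻ y, g y * (w y)⁻¹ * f y ^ 2 ∂μ) ^ (1 / 2 : ℝ)) ^ 2 := by gcongr; exact hCS
    _ = _ := by
      rw [← ENNReal.mul_rpow_of_nonneg _ _ (by norm_num), ← ENNReal.rpow_natCast,
        ← ENNReal.rpow_mul]
      norm_num

theorem lintegral_sq_lintegral_kernel_le_of_schur [SFinite μ] {k : X → X → ℝ≥0∞}
    (hk : Measurable (uncurry k)) {w : X → ℝ≥0∞} (hw : Measurable w)
    (hw0 : ∀ᵐ y ∂μ, w y ≠ 0) (hw_top : ∀ᵐ y ∂μ, w y ≠ ∞) {A B : ℝ≥0∞}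
    (hrow : ∀ᵐ x ∂μ, ∫⁻ y, k x y * w y ∂μ ≤ A * w x)
    (hcol : ∀ᵐ y ∂μ, ∫⁻ x, k x y * w x ∂μ ≤ B * w y)
    {f : X → ℝ≥0∞} (hf : AEMeasurable f μ) :
    ∫⁻ x, (∫⁻ y, k x y * f y ∂μ) ^ 2 ∂μ ≤ A * B * ∫⁻ y, f y ^ 2 ∂μ := by
  wlog hfm : Measurable f generalizing f
  · have hfg : ∀ x, ∫⁻ y, k x y * f y ∂μ = ∫⁻ y, k x y * hf.mk f y ∂μ := fun x =>
      lintegral_congr_ae (by filter_upwards [hf.ae_eq_mk] with y hy; rw [hy])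
    have hf2 : ∫⁻ y, f y ^ 2 ∂μ = ∫⁻ y, hf.mk f y ^ 2 ∂μ :=
      lintegral_congr_ae (by filter_upwards [hf.ae_eq_mk] with y hy; rw [hy])
    simp_rw [hfg, hf2]
    exact this hf.measurable_mk.aemeasurable hf.measurable_mk
  calc ∫⁻ x, (∫⁻ y, k x y * f y ∂μ) ^ 2 ∂μ
      ≤ ∫⁻ x, A * ∫⁻ y, w x * (k x y * (w y)⁻¹ * f y ^ 2) ∂μ ∂μ := by
        refine lintegral_mono_ae ?_
        filter_upwards [hrow] with x hx
        refine (sq_lintegral_mul_le_of_weight hk.of_uncurry_left.aemeasurable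
          hf hw.aemeasurable hw0 hw_top).trans ?_
        rw [lintegral_const_mul _ (by fun_prop), ← mul_assoc]
        gcongr
    _ = A * ∫⁻ y, (∫⁻ x, k x y * w x ∂μ) * ((w y)⁻¹ * f y ^ 2) ∂μ := by
        rw [lintegral_const_mul _ (by fun_prop), lintegral_lintegral_swap (by fun_prop)]
        congr 1
        refine lintegral_congr fun y => ?_
        rw [← lintegral_mul_const _ (by fun_prop)]
        congr 1 with x
        ring
    _ ≤ A * ∫⁻ y, B * w y * ((w y)⁻¹ * f y ^ 2) ∂μ := by
        gcongr A * ?_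
        refine lintegral_mono_ae ?_
        filter_upwards [hcol] with y hy
        gcongr
    _ = A * B * ∫⁻ y, f y ^ 2 ∂μ := by
        have hcancel : (fun y => B * w y * ((w y)⁻¹ * f y ^ 2)) =ᵐ[μ] fun y => B * f y ^ 2 := by
          filter_upwards [hw0, hw_top] with y hy0 hy_top
          rw [mul_assoc, ← mul_assoc (w y), ENNReal.mul_inv_cancel hy0 hy_top, one_mul]
        rw [lintegral_congr_ae hcancel, lintegral_const_mul _ (by fun_prop), mul_assoc]

end Schur

theorem eLpNorm_two_sq_eq_lintegral {X E : Type*} [MeasurableSpace X] {μ : Measure X} [ENorm E]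
    (f : X → E) :
    eLpNorm f 2 μ ^ 2 = ∫⁻ x, ‖f x‖ₑ ^ 2 ∂μ := by
  simpa using eLpNorm_nnreal_pow_eq_lintegral (f := f) (μ := μ) (p := 2) two_ne_zero

theorem setLIntegral_Ioo_ite_lt_left (F : ℝ → ℝ≥0∞) {a b x : ℝ} (hx : a ≤ x) :
    ∫⁻ y in Ioo a b, (if x < y then F y else 0) = ∫⁻ y in Ioo x b, F y := by
  have : Ioi x ∩ Ioo a b = Ioo x b := by ext; simp only [mem_inter_iff, mem_Ioi, mem_Ioo]; grind
  rw [← this, ← Measure.restrict_restrict measurableSet_Ioi,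
    ← lintegral_indicator measurableSet_Ioi]
  rfl

theorem setLIntegral_Ioo_ite_lt_right (F : ℝ → ℝ≥0∞) {a b y : ℝ} (hy : y ≤ b) :
    ∫⁻ x in Ioo a b, (if x < y then F x else 0) = ∫⁻ x in Ioo a y, F x := by
  have : Iio y ∩ Ioo a b = Ioo a y := by ext; simp only [mem_inter_iff, mem_Iio, mem_Ioo]; grind
  rw [← this, ← Measure.restrict_restrict measurableSet_Iio,
    ← lintegral_indicator measurableSet_Iio]
  rfl

theorem lintegral_ofReal_deriv_le_of_monotoneOn {f f' : ℝ → ℝ} {s : Set ℝ} {a b : ℝ}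
    (hs : MeasurableSet s) (hf' : ∀ x ∈ s, HasDerivWithinAt f (f' x) s x)
    (hf : MonotoneOn f s) (hmaps : MapsTo f s (Icc a b)) :
    ∫⁻ x in s, ENNReal.ofReal (f' x) ≤ ENNReal.ofReal (b - a) := by
  rw [lintegral_deriv_eq_volume_image_of_monotoneOn hs hf' hf, ← Real.volume_Icc]
  exact measure_mono hmaps.image_subset

theorem lintegral_ofReal_neg_deriv_le_of_antitoneOn {f f' : ℝ → ℝ} {s : Set ℝ} {a b : ℝ}
    (hs : MeasurableSet s) (hf' : ∀ x ∈ s, HasDerivWithinAt f (f' x) s x)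
    (hf : AntitoneOn f s) (hmaps : MapsTo f s (Icc a b)) :
    ∫⁻ x in s, ENNReal.ofReal (-f' x) ≤ ENNReal.ofReal (b - a) := by
  rw [lintegral_deriv_eq_volume_image_of_antitoneOn hs hf' hf, ← Real.volume_Icc]
  exact measure_mono hmaps.image_subset

theorem rpow_mul_exp_neg_mul_le {q κ u : ℝ} (hq : 0 < q) (hκ : 0 < κ) (hu : 0 < u) :
    u ^ q * exp (-(κ * u)) ≤ (q / κ) ^ q * exp (-q) := by
  have hlog : q * log (κ * u / q) ≤ q * (κ * u / q - 1) :=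
    mul_le_mul_of_nonneg_left (log_le_sub_one_of_pos (by positivity)) hq.le
  rw [rpow_def_of_pos hu, rpow_def_of_pos (by positivity), ← exp_add, ← exp_add, exp_le_exp]
  rw [log_div (by positivity) hq.ne', log_mul hκ.ne' hu.ne', log_div hq.ne' hκ.ne'] at *
  field_simp at hlog
  nlinarith

theorem rpow_le_mul_rpow_neg {α β y ε : ℝ} (hy : 0 < y) (hyε : y ≤ ε) (hαβ : 0 ≤ α + β) :
    y ^ β ≤ ε ^ (α + β) * y ^ (-α) := by
  calc y ^ β = y ^ (α + β) * y ^ (-α) := by rw [← rpow_add hy]; ring_nf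
    _ ≤ ε ^ (α + β) * y ^ (-α) := by gcongr

/-- `exp (-s ∫_y^x t^(-α) dt)`, the kernel of `P_{1,s}^{1/h}` for `h(t) = t^α`. -/
noncomputable def powKernel (α s x y : ℝ) : ℝ := exp (s * (x ^ (1 - α) - y ^ (1 - α)) / (α - 1))

section powKernel

variable {α s x y : ℝ}

theorem powKernel_pos : 0 < powKernel α s x y := exp_pos _

theorem powKernel_le_one (hα : 1 < α) (hs : s ≤ 0) (hx : 0 < x) (hxy : x ≤ y) :
    powKernel α s x y ≤ 1 := by
  have : y ^ (1 - α) ≤ x ^ (1 - α) := rpow_le_rpow_of_nonpos hx hxy (by linarith)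
  exact exp_le_one_iff.2 (div_nonpos_of_nonpos_of_nonneg
    (mul_nonpos_of_nonpos_of_nonneg hs (by linarith)) (by linarith))

theorem powKernel_half_sq : powKernel α (s / 2) x y ^ 2 = powKernel α s x y := by
  rw [powKernel, powKernel, ← exp_nat_mul]
  congr 1
  ring

theorem hasDerivAt_powKernel_left (hα : α ≠ 1) (hx : 0 < x) :
    HasDerivAt (fun x => powKernel α s x y) (-s * x ^ (-α) * powKernel α s x y) x := by
  unfold powKernel
  convert ((((hasDerivAt_rpow_const (p := 1 - α) (Or.inl hx.ne')).sub_const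
    (y ^ (1 - α))).const_mul s).div_const (α - 1)).exp using 1
  rw [show 1 - α - 1 = -α by ring]
  field_simp [sub_ne_zero.2 hα]
  ring

theorem hasDerivAt_powKernel_right (hα : α ≠ 1) (hy : 0 < y) :
    HasDerivAt (fun y => powKernel α s x y) (s * y ^ (-α) * powKernel α s x y) y := by
  unfold powKernel
  convert ((((hasDerivAt_rpow_const (p := 1 - α) (Or.inl hy.ne')).const_sub
    (x ^ (1 - α))).const_mul s).div_const (α - 1)).exp using 1
  rw [show 1 - α - 1 = -α by ring]
  field_simp [sub_ne_zero.2 hα]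
  ring

theorem exp_neg_mul_integral_one_div_le_powKernel {h : ℝ → ℝ} (hα : 1 < α) (hs : s ≤ 0)
    (hx : 0 < x) (hxy : x ≤ y) (hpos : ∀ t ∈ Icc x y, 0 < h t) (hmono : MonotoneOn h (Icc x y))
    (hbound : ∀ t ∈ Icc x y, h t ≤ t ^ α) :
    exp (-(s * ∫ t in y..x, 1 / h t)) ≤ powKernel α s x y := by
  have hu : uIcc x y = Icc x y := uIcc_of_le hxy
  have hint : IntervalIntegrable (fun t => 1 / h t) volume x y := by
    refine AntitoneOn.intervalIntegrable ?_
    rw [hu]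
    exact fun a ha b hb hab => one_div_le_one_div_of_le (hpos a ha) (hmono ha hb hab)
  have hpow_int : (∫ t in x..y, t ^ (-α)) = (x ^ (1 - α) - y ^ (1 - α)) / (α - 1) := by
    rw [integral_rpow (Or.inr ⟨by linarith, by rw [hu]; exact fun h0 => (hx.trans_le h0.1).false⟩),
      show -α + 1 = 1 - α by ring]
    field_simp [show 1 - α ≠ 0 by linarith, show α - 1 ≠ 0 by linarith]
    ring
  have hle : (x ^ (1 - α) - y ^ (1 - α)) / (α - 1) ≤ ∫ t in x..y, 1 / h t := by
    rw [← hpow_int]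
    refine intervalIntegral.integral_mono_on hxy ?_ hint fun t ht => ?_
    · exact ContinuousOn.intervalIntegrable fun t ht => (continuousAt_rpow_const t (-α)
        (Or.inl (hx.trans_le (hu ▸ ht).1).ne')).continuousWithinAt
    · rw [rpow_neg (hx.trans_le ht.1).le, ← one_div]
      exact one_div_le_one_div_of_le (hpos t ht) (hbound t ht)
  rw [powKernel, intervalIntegral.integral_symm, exp_le_exp, mul_neg, neg_neg, mul_div_assoc]
  exact mul_le_mul_of_nonpos_left hle hs

theorem lintegral_rpow_neg_mul_powKernel_left_le (hα : 1 < α) (hs : s < 0) :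
    ∫⁻ x in Ioo 0 y, ENNReal.ofReal (-s * x ^ (-α) * powKernel α s x y) ≤ 1 := by
  have hderiv : ∀ x ∈ Ioo 0 y, HasDerivAt (fun x => powKernel α s x y)
      (-s * x ^ (-α) * powKernel α s x y) x := fun x hx =>
    hasDerivAt_powKernel_left hα.ne' hx.1
  have hmono : MonotoneOn (fun x => powKernel α s x y) (Ioo 0 y) := by
    refine monotoneOn_of_hasDerivWithinAt_nonneg (f' := fun x => -s * x ^ (-α) * powKernel α s x y)
      (convex_Ioo 0 y)
      (fun x hx => (hderiv x hx).continuousAt.continuousWithinAt) ?_ ?_ <;> rw [interior_Ioo]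
    · exact fun x hx => (hderiv x hx).hasDerivWithinAt
    · exact fun x hx => mul_nonneg (mul_nonneg (by linarith) (rpow_pos_of_pos hx.1 _).le)
        powKernel_pos.le
  have hmaps : MapsTo (fun x => powKernel α s x y) (Ioo 0 y) (Icc 0 1) := fun x hx =>
    ⟨powKernel_pos.le, powKernel_le_one hα hs.le hx.1 hx.2.le⟩
  simpa using lintegral_ofReal_deriv_le_of_monotoneOn measurableSet_Ioo
    (fun x hx => (hderiv x hx).hasDerivWithinAt) hmono hmaps

theorem lintegral_rpow_neg_mul_powKernel_right_le (hα : 1 < α) (hs : s < 0) (hx : 0 < x)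
    (ε : ℝ) : ∫⁻ y in Ioo x ε, ENNReal.ofReal (-s * y ^ (-α) * powKernel α s x y) ≤ 1 := by
  have hderiv : ∀ y ∈ Ioo x ε, HasDerivAt (fun y => powKernel α s x y)
      (s * y ^ (-α) * powKernel α s x y) y := fun y hy =>
    hasDerivAt_powKernel_right hα.ne' (hx.trans hy.1)
  have hanti : AntitoneOn (fun y => powKernel α s x y) (Ioo x ε) := by
    refine antitoneOn_of_hasDerivWithinAt_nonpos (f' := fun y => s * y ^ (-α) * powKernel α s x y)
      (convex_Ioo x ε)
      (fun y hy => (hderiv y hy).continuousAt.continuousWithinAt) ?_ ?_ <;> rw [interior_Ioo]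
    · exact fun y hy => (hderiv y hy).hasDerivWithinAt
    · intro y hy
      exact mul_nonpos_of_nonpos_of_nonneg (mul_nonpos_of_nonpos_of_nonneg hs.le
        (rpow_pos_of_pos (hx.trans hy.1) (-α)).le) powKernel_pos.le
  have hmaps : MapsTo (fun y => powKernel α s x y) (Ioo x ε) (Icc 0 1) := fun y hy =>
    ⟨powKernel_pos.le, powKernel_le_one hα hs.le hx hy.1.le⟩
  simpa [neg_mul] using lintegral_ofReal_neg_deriv_le_of_antitoneOn measurableSet_Ioo
    (fun y hy => (hderiv y hy).hasDerivWithinAt) hanti hmaps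

theorem lintegral_powKernel_mul_rpow_le {β ε : ℝ} (hα : 1 < α) (hαβ : 0 ≤ α + β) (hs : s < 0)
    (hx : 0 < x) :
    ∫⁻ y in Ioo x ε, ENNReal.ofReal (powKernel α s x y * y ^ β) ≤
      ENNReal.ofReal (ε ^ (α + β) / -s) := by
  calc ∫⁻ y in Ioo x ε, ENNReal.ofReal (powKernel α s x y * y ^ β)
      ≤ ∫⁻ y in Ioo x ε, ENNReal.ofReal (ε ^ (α + β) / -s) *
          ENNReal.ofReal (-s * y ^ (-α) * powKernel α s x y) := by
        refine setLIntegral_mono' measurableSet_Ioo fun y hy => ?_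
        have hy0 : 0 < y := hx.trans hy.1
        rw [← ENNReal.ofReal_mul'
          (mul_pos (mul_pos (neg_pos.2 hs) (rpow_pos_of_pos hy0 _)) powKernel_pos).le]
        refine ENNReal.ofReal_le_ofReal ?_
        calc powKernel α s x y * y ^ β ≤ powKernel α s x y * (ε ^ (α + β) * y ^ (-α)) :=
              mul_le_mul_of_nonneg_left (rpow_le_mul_rpow_neg hy0 hy.2.le hαβ) powKernel_pos.le
          _ = ε ^ (α + β) / -s * (-s * y ^ (-α) * powKernel α s x y) := by
              field_simp [hs.ne]
    _ = ENNReal.ofReal (ε ^ (α + β) / -s) *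
          ∫⁻ y in Ioo x ε, ENNReal.ofReal (-s * y ^ (-α) * powKernel α s x y) :=
        lintegral_const_mul' _ _ ENNReal.ofReal_ne_top
    _ ≤ ENNReal.ofReal (ε ^ (α + β) / -s) := by
        grw [lintegral_rpow_neg_mul_powKernel_right_le hα hs hx ε, mul_one]

theorem lintegral_rpow_mul_powKernel_le {β ε C : ℝ} (hα : 1 < α) (hαβ : 0 ≤ α + β) (hs : s < 0)
    (hC : ∀ x ∈ Ioo 0 y, x ^ β * powKernel α (s / 2) x y ≤ C * y ^ β) (hyε : y ≤ ε) :
    ∫⁻ x in Ioo 0 y, ENNReal.ofReal (x ^ (2 * β) * powKernel α s x y) ≤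
      ENNReal.ofReal (2 * C * ε ^ (α + β) / -s * y ^ β) := by
  calc ∫⁻ x in Ioo 0 y, ENNReal.ofReal (x ^ (2 * β) * powKernel α s x y)
      ≤ ∫⁻ x in Ioo 0 y, ENNReal.ofReal (2 * C * ε ^ (α + β) / -s * y ^ β) *
          ENNReal.ofReal (-(s / 2) * x ^ (-α) * powKernel α (s / 2) x y) := by
        refine setLIntegral_mono' measurableSet_Ioo fun x hx => ?_
        have hCy : 0 ≤ C * y ^ β :=
          (mul_nonneg (rpow_nonneg hx.1.le β) powKernel_pos.le).trans (hC x hx)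
        rw [← ENNReal.ofReal_mul'
          (mul_pos (mul_pos (by linarith) (rpow_pos_of_pos hx.1 _)) powKernel_pos).le]
        refine ENNReal.ofReal_le_ofReal ?_
        calc x ^ (2 * β) * powKernel α s x y
            = (x ^ β * powKernel α (s / 2) x y) * (x ^ β * powKernel α (s / 2) x y) := by
              rw [← powKernel_half_sq, mul_comm 2 β, rpow_mul hx.1.le, rpow_two]
              ring
          _ ≤ (C * y ^ β) * (ε ^ (α + β) * x ^ (-α) * powKernel α (s / 2) x y) := by
              refine mul_le_mul (hC x hx) ?_
                (mul_nonneg (rpow_nonneg hx.1.le β) powKernel_pos.le) hCy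
              exact mul_le_mul_of_nonneg_right
                (rpow_le_mul_rpow_neg hx.1 (hx.2.le.trans hyε) hαβ) powKernel_pos.le
          _ = 2 * C * ε ^ (α + β) / -s * y ^ β *
                (-(s / 2) * x ^ (-α) * powKernel α (s / 2) x y) := by
              field_simp [hs.ne]
    _ = ENNReal.ofReal (2 * C * ε ^ (α + β) / -s * y ^ β) *
          ∫⁻ x in Ioo 0 y, ENNReal.ofReal (-(s / 2) * x ^ (-α) * powKernel α (s / 2) x y) :=
        lintegral_const_mul' _ _ ENNReal.ofReal_ne_top
    _ ≤ ENNReal.ofReal (2 * C * ε ^ (α + β) / -s * y ^ β) := by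
        grw [lintegral_rpow_neg_mul_powKernel_left_le hα (by linarith), mul_one]

theorem exists_rpow_mul_powKernel_le (hα : 1 < α) (β : ℝ) {s₀ : ℝ} (hs₀ : s₀ < 0) :
    ∃ C > 0, ∀ s ≤ s₀, ∀ x y, 0 < x → x ≤ y → y ≤ 1 →
      x ^ β * powKernel α s x y ≤ C * y ^ β := by
  have hα1 : 0 < α - 1 := by linarith
  set κ := -s₀ / (α - 1)
  have hκ : 0 < κ := div_pos (by linarith) hα1
  set q := max (-β / (α - 1)) 1
  have hq : 0 < q := zero_lt_one.trans_le (le_max_right _ _)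
  refine ⟨exp κ * ((q / κ) ^ q * exp (-q)),
    mul_pos (exp_pos _) (mul_pos (rpow_pos_of_pos (div_pos hq hκ) _) (exp_pos _)),
    fun s hs x y hx hxy hy1 => ?_⟩
  have hy : 0 < y := hx.trans_le hxy
  have hy' : 0 < y ^ (1 - α) := rpow_pos_of_pos hy _
  -- In terms of `u = (x / y) ^ (1 - α) ≥ 1`, `(x / y) ^ β` is a power of `u` while `K_s(x, y)`
  -- decays exponentially in `u`.
  set u := x ^ (1 - α) / y ^ (1 - α)
  have hu : 1 ≤ u := (one_le_div hy').2 (rpow_le_rpow_of_nonpos hx hxy (by linarith))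
  have hxβ : x ^ β ≤ u ^ q * y ^ β := by
    have hxβ_eq : x ^ β = u ^ (-β / (α - 1)) * y ^ β := by
      rw [div_rpow (rpow_nonneg hx.le _) hy'.le, ← rpow_mul hx.le, ← rpow_mul hy.le,
        show (1 - α) * (-β / (α - 1)) = β by field_simp; ring,
        div_mul_cancel₀ _ (rpow_pos_of_pos hy β).ne']
    rw [hxβ_eq]
    exact mul_le_mul_of_nonneg_right (rpow_le_rpow_of_exponent_le hu (le_max_left _ _))
      (rpow_nonneg hy.le _)
  have hK : powKernel α s x y ≤ exp κ * exp (-(κ * u)) := by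
    have hy1' : 1 ≤ y ^ (1 - α) := one_le_rpow_of_pos_of_le_one_of_nonpos hy hy1 (by linarith)
    have hx' : x ^ (1 - α) = y ^ (1 - α) * u := (mul_div_cancel₀ _ hy'.ne').symm
    rw [powKernel, ← exp_add, exp_le_exp, hx', div_le_iff₀ hα1]
    simp only [κ]
    field_simp
    have hsy : s * y ^ (1 - α) ≤ s₀ := by nlinarith
    nlinarith [mul_le_mul_of_nonneg_right hsy (sub_nonneg.2 hu)]
  calc x ^ β * powKernel α s x y ≤ (u ^ q * y ^ β) * (exp κ * exp (-(κ * u))) :=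
        mul_le_mul hxβ hK powKernel_pos.le (by positivity)
    _ = exp κ * (u ^ q * exp (-(κ * u))) * y ^ β := by ring
    _ ≤ exp κ * ((q / κ) ^ q * exp (-q)) * y ^ β := by
        gcongr exp κ * ?_ * _
        exact rpow_mul_exp_neg_mul_le hq hκ (zero_lt_one.trans_le hu)

end powKernel

noncomputable def powVolterraKernel (α β s x y : ℝ) : ℝ≥0∞ :=
  if x < y then ENNReal.ofReal (x ^ β * powKernel α s x y) else 0

section powVolterraKernel

variable {α β s ε : ℝ}

theorem measurable_uncurry_powVolterraKernel : Measurable (uncurry (powVolterraKernel α β s)) :=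
  Measurable.ite (measurableSet_lt measurable_fst measurable_snd) (by unfold powKernel; fun_prop)
    measurable_const

theorem enorm_rpow_mul_integral_le_lintegral_powVolterraKernel {h f : ℝ → ℝ} {x : ℝ}
    (hα : 1 < α) (hs : s ≤ 0) (hε1 : ε ≤ 1) (hpos : ∀ t ∈ Ioc (0:ℝ) 1, 0 < h t)
    (hmono : MonotoneOn h (Ioc 0 1)) (hbound : ∀ t ∈ Ioc (0:ℝ) 1, h t ≤ t ^ α)
    (hx : x ∈ Ioo 0 ε) :
    ‖x ^ β * ∫ y in Ioo x ε, exp (-(s * ∫ t in y..x, 1 / h t)) * f y‖ₑ ≤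
      ∫⁻ y in Ioo 0 ε, powVolterraKernel α β s x y * ‖f y‖ₑ := by
  simp only [powVolterraKernel, ite_mul, zero_mul]
  rw [setLIntegral_Ioo_ite_lt_left _ hx.1.le]
  have hxβ : 0 ≤ x ^ β := rpow_nonneg hx.1.le β
  have hker : ∀ y ∈ Ioo x ε, exp (-(s * ∫ t in y..x, 1 / h t)) ≤ powKernel α s x y := by
    intro y hy
    have hsub : Icc x y ⊆ Ioc 0 1 := fun t ht =>
      ⟨hx.1.trans_le ht.1, ht.2.trans (hy.2.le.trans hε1)⟩
    exact exp_neg_mul_integral_one_div_le_powKernel hα hs hx.1 hy.1.le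
      (fun t ht => hpos t (hsub ht)) (hmono.mono hsub) (fun t ht => hbound t (hsub ht))
  calc ‖x ^ β * ∫ y in Ioo x ε, exp (-(s * ∫ t in y..x, 1 / h t)) * f y‖ₑ
      = ENNReal.ofReal (x ^ β) *
          ‖∫ y in Ioo x ε, exp (-(s * ∫ t in y..x, 1 / h t)) * f y‖ₑ := by
        rw [enorm_mul, Real.enorm_eq_ofReal hxβ]
    _ ≤ ENNReal.ofReal (x ^ β) *
          ∫⁻ y in Ioo x ε, ‖exp (-(s * ∫ t in y..x, 1 / h t)) * f y‖ₑ := by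
        grw [enorm_integral_le_lintegral_enorm]
    _ ≤ ENNReal.ofReal (x ^ β) *
          ∫⁻ y in Ioo x ε, ENNReal.ofReal (powKernel α s x y) * ‖f y‖ₑ := by
        gcongr _ * ?_
        refine setLIntegral_mono' measurableSet_Ioo fun y hy => ?_
        rw [enorm_mul, Real.enorm_eq_ofReal (exp_pos _).le]
        gcongr
        exact hker y hy
    _ = ∫⁻ y in Ioo x ε, ENNReal.ofReal (x ^ β * powKernel α s x y) * ‖f y‖ₑ := by
        rw [← lintegral_const_mul' _ _ ENNReal.ofReal_ne_top]
        simp_rw [ENNReal.ofReal_mul hxβ, mul_assoc]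

theorem setLIntegral_powVolterraKernel_mul_rpow_left_le {x : ℝ} (hα : 1 < α)
    (hαβ : 0 ≤ α + β) (hs : s < 0) (hx : x ∈ Ioo 0 ε) :
    ∫⁻ y in Ioo 0 ε, powVolterraKernel α β s x y * ENNReal.ofReal (y ^ β) ≤
      ENNReal.ofReal (ε ^ (α + β) / -s) * ENNReal.ofReal (x ^ β) := by
  simp only [powVolterraKernel, ite_mul, zero_mul]
  rw [setLIntegral_Ioo_ite_lt_left _ hx.1.le]
  have hxβ : 0 ≤ x ^ β := rpow_nonneg hx.1.le β
  calc ∫⁻ y in Ioo x ε, ENNReal.ofReal (x ^ β * powKernel α s x y) * ENNReal.ofReal (y ^ β)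
      = ENNReal.ofReal (x ^ β) *
          ∫⁻ y in Ioo x ε, ENNReal.ofReal (powKernel α s x y * y ^ β) := by
        rw [← lintegral_const_mul' _ _ ENNReal.ofReal_ne_top]
        simp_rw [ENNReal.ofReal_mul hxβ, ENNReal.ofReal_mul powKernel_pos.le, mul_assoc]
    _ ≤ ENNReal.ofReal (x ^ β) * ENNReal.ofReal (ε ^ (α + β) / -s) := by
        grw [lintegral_powKernel_mul_rpow_le hα hαβ hs hx.1]
    _ = _ := mul_comm _ _

theorem setLIntegral_powVolterraKernel_mul_rpow_right_le {y C : ℝ} (hα : 1 < α)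
    (hαβ : 0 ≤ α + β) (hs : s < 0)
    (hC : ∀ x ∈ Ioo 0 y, x ^ β * powKernel α (s / 2) x y ≤ C * y ^ β) (hy : y ∈ Ioo 0 ε) :
    ∫⁻ x in Ioo 0 ε, powVolterraKernel α β s x y * ENNReal.ofReal (x ^ β) ≤
      ENNReal.ofReal (2 * C * ε ^ (α + β) / -s) * ENNReal.ofReal (y ^ β) := by
  simp only [powVolterraKernel, ite_mul, zero_mul]
  rw [setLIntegral_Ioo_ite_lt_right _ hy.2.le, ← ENNReal.ofReal_mul' (rpow_nonneg hy.1.le β)]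
  refine le_of_eq_of_le (setLIntegral_congr_fun measurableSet_Ioo fun x hx => ?_)
    (lintegral_rpow_mul_powKernel_le hα hαβ hs hC hy.2.le)
  rw [← ENNReal.ofReal_mul' (rpow_nonneg hx.1.le β), mul_comm 2 β, rpow_mul hx.1.le, rpow_two]
  ring_nf

theorem lintegral_sq_lintegral_powVolterraKernel_le {C : ℝ} (hα : 1 < α) (hαβ : 0 ≤ α + β)
    (hs : s < 0)
    (hC : ∀ y ∈ Ioo 0 ε, ∀ x ∈ Ioo 0 y, x ^ β * powKernel α (s / 2) x y ≤ C * y ^ β)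
    {g : ℝ → ℝ≥0∞} (hg : AEMeasurable g (volume.restrict (Ioo 0 ε))) :
    ∫⁻ x in Ioo 0 ε, (∫⁻ y in Ioo 0 ε, powVolterraKernel α β s x y * g y) ^ 2 ≤
      ENNReal.ofReal (ε ^ (α + β) / -s) * ENNReal.ofReal (2 * C * ε ^ (α + β) / -s) *
        ∫⁻ y in Ioo 0 ε, g y ^ 2 := by
  have hw0 : ∀ᵐ y ∂volume.restrict (Ioo 0 ε), ENNReal.ofReal (y ^ β) ≠ 0 :=
    (ae_restrict_iff' measurableSet_Ioo).2
      (.of_forall fun y hy => by simp [rpow_pos_of_pos hy.1])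
  refine lintegral_sq_lintegral_kernel_le_of_schur measurable_uncurry_powVolterraKernel
    (by fun_prop) hw0 (.of_forall fun _ => ENNReal.ofReal_ne_top) ?_ ?_ hg
  · exact (ae_restrict_iff' measurableSet_Ioo).2 (.of_forall fun x hx =>
      setLIntegral_powVolterraKernel_mul_rpow_left_le hα hαβ hs hx)
  · exact (ae_restrict_iff' measurableSet_Ioo).2 (.of_forall fun y hy =>
      setLIntegral_powVolterraKernel_mul_rpow_right_le hα hαβ hs (hC y hy) hy)

end powVolterraKernel

/-- Lemma 3.2, case `s ≤ s₀ < 0`: `‖X^β P_{1,s}^{1/h} f‖ ≤ (C/|s|) ε^{α+β} ‖f‖` in `L²(0,ε)`. -/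
theorem stmt_9 (α β ε : ℝ) (hα : 1 < α) (hβ : -α < β) (hε : 0 < ε) (hε1 : ε ≤ 1)
    (h : ℝ → ℝ)
    (hpos : ∀ x ∈ Ioc (0:ℝ) 1, 0 < h x)
    (hmono : ∀ x ∈ Ioc (0:ℝ) 1, ∀ y ∈ Ioc (0:ℝ) 1, x ≤ y → h x ≤ h y)
    (hbound : ∀ x ∈ Ioc (0:ℝ) 1, h x ≤ x ^ α)
    (s₀ : ℝ) (hs₀ : s₀ < 0) :
    ∃ C > (0:ℝ), ∀ s ≤ s₀, ∀ f : ℝ → ℝ,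
      MemLp f 2 (volume.restrict (Ioo (0:ℝ) ε)) →
      eLpNorm (fun x => x ^ β * ∫ y in Ioo x ε,
          Real.exp (-(s * ∫ t in y..x, 1 / h t)) * f y)
        2 (volume.restrict (Ioo (0:ℝ) ε)) ≤
        ENNReal.ofReal (C / |s| * ε ^ (α + β)) *
          eLpNorm f 2 (volume.restrict (Ioo (0:ℝ) ε)) := by
  obtain ⟨C, hC, hCbound⟩ := exists_rpow_mul_powKernel_le hα β (by linarith : s₀ / 2 < 0)
  refine ⟨√(2 * C), by positivity, fun s hs f hf => ?_⟩
  have hs0 : s < 0 := hs.trans_lt hs₀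
  have hconst : ENNReal.ofReal (ε ^ (α + β) / -s) * ENNReal.ofReal (2 * C * ε ^ (α + β) / -s) =
      ENNReal.ofReal (√(2 * C) / |s| * ε ^ (α + β)) ^ 2 := by
    have : 0 < -s := neg_pos.2 hs0
    rw [← ENNReal.ofReal_mul (by positivity), ← ENNReal.ofReal_pow (by positivity), mul_pow,
      div_pow, sq_sqrt (by positivity), sq_abs]
    congr 1
    field_simp
  rw [← ENNReal.pow_le_pow_left_iff two_ne_zero, mul_pow, eLpNorm_two_sq_eq_lintegral,
    eLpNorm_two_sq_eq_lintegral, ← hconst]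
  calc ∫⁻ x in Ioo 0 ε, ‖x ^ β * ∫ y in Ioo x ε, exp (-(s * ∫ t in y..x, 1 / h t)) * f y‖ₑ ^ 2
      ≤ ∫⁻ x in Ioo 0 ε, (∫⁻ y in Ioo 0 ε, powVolterraKernel α β s x y * ‖f y‖ₑ) ^ 2 :=
        setLIntegral_mono' measurableSet_Ioo fun x hx => by
          grw [enorm_rpow_mul_integral_le_lintegral_powVolterraKernel hα hs0.le hε1 hpos
            (fun a ha b hb hab => hmono a ha b hb hab) hbound hx]
    _ ≤ _ := lintegral_sq_lintegral_powVolterraKernel_le hα (by linarith) hs0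
        (fun y hy x hx => hCbound (s / 2) (by linarith) x y hx.1 hx.2.le (hy.2.le.trans hε1))
        hf.1.enorm
end
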